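/- arXiv:1905.07890 — 6 statements merged into one kernel-verified Lean document; each statement's English description precedes it below -/
import Mathlib

section
/- Let X and Y be Hilbert spaces with X compactly and densely embedded in Y. Then the space of 1-periodic functions u : ℝ → X with u ∈ L²_loc(ℝ;X) and D_t u ∈ L²_loc(ℝ;Y), normed by the L²(0,1)-norms of u in X and D_t u in Y, embeds compactly into the space of 1-periodic functions in L²_loc(ℝ;Y) with the L²(0,1;Y) norm. -/
open MeasureTheory Set

/-- Aubin–Lions type compactness: the 1-periodic space
`𝒳̂` (with `‖u‖_X`, `‖D_t u‖_Y` in `L²(0,1)`) embeds compactly into the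
1-periodic space `𝒴̂` with the `L²(0,1;Y)` norm.  Compactness is expressed
sequentially: every bounded sequence in `𝒳̂` has a subsequence which is
Cauchy in the `𝒴̂` norm. -/
theorem stmt0
    {X Y : Type*} [NormedAddCommGroup X] [InnerProductSpace ℂ X] [CompleteSpace X]
    [NormedAddCommGroup Y] [InnerProductSpace ℂ Y] [CompleteSpace Y]
    (e : X →L[ℂ] Y) (he_inj : Function.Injective e)
    (he_dense : DenseRange e) (he_cpt : IsCompactOperator e)
    (u : ℕ → ℝ → X) (u' : ℕ → ℝ → Y)
    (hper : ∀ n, Function.Periodic (u n) 1)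
    (hderiv : ∀ n t, HasDerivAt (fun s => e (u n s)) (u' n t) t)
    (hint : ∀ n, IntervalIntegrable (fun t => ‖u n t‖ ^ 2 + ‖u' n t‖ ^ 2) volume 0 1)
    (C : ℝ)
    (hbound : ∀ n, (∫ t in (0:ℝ)..1, (‖u n t‖ ^ 2 + ‖u' n t‖ ^ 2)) ≤ C) :
    ∃ φ : ℕ → ℕ, StrictMono φ ∧
      ∀ ε > 0, ∃ N, ∀ p ≥ N, ∀ q ≥ N,
        (∫ t in (0:ℝ)..1, ‖e (u (φ p) t) - e (u (φ q) t)‖ ^ 2) < ε := by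
  classical
  -- the continuous Y-valued functions
  have hgc : ∀ n, Continuous (fun t => e (u n t)) := fun n =>
    continuous_iff_continuousAt.2 fun t => (hderiv n t).continuousAt
  -- `u' n` is strongly measurable (it is the derivative of an everywhere differentiable map)
  have hu'eq : ∀ n, u' n = deriv (fun t => e (u n t)) := by
    intro n; funext t; exact ((hderiv n t).deriv).symm
  have hu'm : ∀ n, StronglyMeasurable (u' n) := fun n =>
    (hu'eq n) ▸ stronglyMeasurable_deriv (fun t => e (u n t))
  have hC : 0 ≤ C :=
    le_trans (intervalIntegral.integral_nonneg zero_le_one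
      (fun t _ => by positivity)) (hbound 0)
  -- integrability of the pieces
  have hq'm : ∀ n, StronglyMeasurable (fun t => ‖u' n t‖ ^ 2) := by
    intro n
    have h := (hu'm n).norm
    simpa [pow_two] using (show StronglyMeasurable fun t => ‖u' n t‖ * ‖u' n t‖ from h.mul h)
  have hq'i : ∀ n, IntervalIntegrable (fun t => ‖u' n t‖ ^ 2) volume 0 1 := by
    intro n
    refine (hint n).mono_fun (hq'm n).aestronglyMeasurable (Filter.Eventually.of_forall ?_)
    intro t
    have h1 : (0:ℝ) ≤ ‖u' n t‖ ^ 2 := by positivity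
    have h2 : (0:ℝ) ≤ ‖u n t‖ ^ 2 := by positivity
    simp only [Real.norm_eq_abs, abs_of_nonneg h1, abs_of_nonneg (by linarith : (0:ℝ) ≤ ‖u n t‖ ^ 2 + ‖u' n t‖ ^ 2)]
    linarith
  have hqi : ∀ n, IntervalIntegrable (fun t => ‖u n t‖ ^ 2) volume 0 1 := by
    intro n
    have h := (hint n).sub (hq'i n)
    simpa using h
  have hq'le : ∀ n, (∫ t in (0:ℝ)..1, ‖u' n t‖ ^ 2) ≤ C := by
    intro n
    refine le_trans (intervalIntegral.integral_mono_on zero_le_one (hq'i n) (hint n) ?_) (hbound n)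
    intro t _
    have : (0:ℝ) ≤ ‖u n t‖ ^ 2 := by positivity
    linarith
  have hqle : ∀ n, (∫ t in (0:ℝ)..1, ‖u n t‖ ^ 2) ≤ C := by
    intro n
    refine le_trans (intervalIntegral.integral_mono_on zero_le_one (hqi n) (hint n) ?_) (hbound n)
    intro t _
    have : (0:ℝ) ≤ ‖u' n t‖ ^ 2 := by positivity
    linarith
  -- `u'` is interval integrable on `[0,1]`
  have hu'i : ∀ n, IntervalIntegrable (u' n) volume 0 1 := by
    intro n
    have hgi : IntervalIntegrable (fun t => 1 + (‖u n t‖ ^ 2 + ‖u' n t‖ ^ 2)) volume 0 1 :=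
      intervalIntegrable_const.add (hint n)
    refine hgi.mono_fun (hu'm n).aestronglyMeasurable (Filter.Eventually.of_forall ?_)
    intro t
    have h1 : (0:ℝ) ≤ ‖u n t‖ ^ 2 := by positivity
    have h2 := sq_nonneg (‖u' n t‖ - 1)
    have h3 : (0:ℝ) ≤ 1 + (‖u n t‖ ^ 2 + ‖u' n t‖ ^ 2) := by positivity
    simp only [Real.norm_eq_abs, abs_of_nonneg h3]
    nlinarith
  -- Key estimate from the fundamental theorem of calculus and AM-GM
  have key : ∀ n a b, 0 ≤ a → a ≤ b → b ≤ 1 → ∀ l : ℝ, 0 < l →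
      ‖e (u n b) - e (u n a)‖ ≤ (b - a) / (2 * l) + l / 2 * C := by
    intro n a b ha hab hb1 l hl
    have hsub : Set.uIoc a b ⊆ Set.uIoc (0:ℝ) 1 := by
      rw [uIoc_of_le hab, uIoc_of_le (zero_le_one : (0:ℝ) ≤ 1)]
      exact Ioc_subset_Ioc ha hb1
    have hint' : IntervalIntegrable (u' n) volume a b := (hu'i n).mono_set' hsub
    have hq'int' : IntervalIntegrable (fun t => ‖u' n t‖ ^ 2) volume a b :=
      (hq'i n).mono_set' hsub
    have hftc : (∫ t in a..b, u' n t) = e (u n b) - e (u n a) :=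
      intervalIntegral.integral_eq_sub_of_hasDerivAt (fun t _ => hderiv n t) hint'
    rw [← hftc]
    have hrhsint : IntervalIntegrable (fun t => 1 / (2 * l) + l / 2 * ‖u' n t‖ ^ 2) volume a b :=
      intervalIntegrable_const.add (hq'int'.const_mul _)
    calc ‖∫ t in a..b, u' n t‖ ≤ ∫ t in a..b, ‖u' n t‖ :=
          intervalIntegral.norm_integral_le_integral_norm hab
      _ ≤ ∫ t in a..b, (1 / (2 * l) + l / 2 * ‖u' n t‖ ^ 2) := by
          refine intervalIntegral.integral_mono_on hab hint'.norm hrhsint ?_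
          intro t _
          rw [← sub_nonneg]
          have heq : 1 / (2 * l) + l / 2 * ‖u' n t‖ ^ 2 - ‖u' n t‖
              = (l * ‖u' n t‖ - 1) ^ 2 / (2 * l) := by
            field_simp
            ring
          rw [heq]
          positivity
      _ = (b - a) * (1 / (2 * l)) + l / 2 * ∫ t in a..b, ‖u' n t‖ ^ 2 := by
          rw [intervalIntegral.integral_add intervalIntegrable_const (hq'int'.const_mul _),
            intervalIntegral.integral_const, intervalIntegral.integral_const_mul]
          simp [smul_eq_mul]
      _ ≤ (b - a) / (2 * l) + l / 2 * C := by
          have h1 : (∫ t in a..b, ‖u' n t‖ ^ 2) ≤ ∫ t in (0:ℝ)..1, ‖u' n t‖ ^ 2 :=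
            intervalIntegral.integral_mono_interval ha hab hb1
              (Filter.Eventually.of_forall fun t => by positivity) (hq'i n)
          have h2 := hq'le n
          have hl2 : (0:ℝ) ≤ l / 2 := by positivity
          have heq : (b - a) * (1 / (2 * l)) = (b - a) / (2 * l) := by ring
          rw [heq]
          gcongr
          linarith
  -- Averaging: near any point there is a point where `u n` is not too large
  have havg : ∀ n (t : ℝ), t ∈ Icc (0:ℝ) 1 → ∀ h : ℝ, 0 < h → h ≤ 1/2 →
      ∃ s, s ∈ Icc (0:ℝ) 1 ∧ |t - s| ≤ h ∧ ‖u n s‖ ^ 2 ≤ (C + 1) / h := by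
    intro n t ht h hh hh2
    by_contra hcon
    push_neg at hcon
    set a := min t (1 - h) with ha
    have ha0 : 0 ≤ a := le_min ht.1 (by linarith)
    have hale : a ≤ 1 - h := min_le_right _ _
    have hab : a + h ≤ 1 := by linarith
    have hmem : ∀ s ∈ Icc a (a + h), s ∈ Icc (0:ℝ) 1 ∧ |t - s| ≤ h := by
      intro s hs
      refine ⟨⟨le_trans ha0 hs.1, le_trans hs.2 hab⟩, ?_⟩
      rw [abs_le]
      have h1 : t - h ≤ a := le_min (by linarith) (by linarith [ht.2])
      have h2 := min_le_left t (1 - h)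
      exact ⟨by linarith [hs.2], by linarith [hs.1]⟩
    have hgt : ∀ s ∈ Icc a (a + h), (C + 1) / h ≤ ‖u n s‖ ^ 2 := fun s hs =>
      le_of_lt (hcon s (hmem s hs).1 (hmem s hs).2)
    have hsub : Set.uIoc a (a + h) ⊆ Set.uIoc (0:ℝ) 1 := by
      rw [uIoc_of_le (by linarith : a ≤ a + h), uIoc_of_le (zero_le_one : (0:ℝ) ≤ 1)]
      exact Ioc_subset_Ioc ha0 hab
    have hi : IntervalIntegrable (fun s => ‖u n s‖ ^ 2) volume a (a + h) :=
      (hqi n).mono_set' hsub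
    have h2 : (∫ s in a..(a + h), (C + 1) / h) ≤ ∫ s in a..(a + h), ‖u n s‖ ^ 2 :=
      intervalIntegral.integral_mono_on (by linarith) intervalIntegrable_const hi hgt
    have h1 : (∫ s in a..(a + h), (C + 1) / h) = C + 1 := by
      rw [intervalIntegral.integral_const]
      rw [smul_eq_mul, add_sub_cancel_left]
      field_simp
    have h3 : (∫ s in a..(a + h), ‖u n s‖ ^ 2) ≤ ∫ s in (0:ℝ)..1, ‖u n s‖ ^ 2 :=
      intervalIntegral.integral_mono_interval ha0 (by linarith) hab
        (Filter.Eventually.of_forall fun s => by positivity) (hqi n)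
    have h4 := hqle n
    linarith
  -- the set of all values is totally bounded in Y
  set S : Set Y := {y | ∃ n, ∃ t ∈ Icc (0:ℝ) 1, e (u n t) = y} with hSdef
  have hS : TotallyBounded S := by
    rw [Metric.totallyBounded_iff]
    intro ε hε
    set δ : ℝ := ε / 3 with hδdef
    have hδ : 0 < δ := by positivity
    set l : ℝ := δ / (C + 1) with hldef
    have hl : 0 < l := by positivity
    have hlC : l / 2 * C ≤ δ / 2 := by
      rw [hldef, div_div, div_mul_eq_mul_div,
        div_le_div_iff₀ (by positivity) (by norm_num)]
      nlinarith
    set h : ℝ := min (1/2) (l * δ) with hhdef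
    have hh : 0 < h := lt_min (by norm_num) (by positivity)
    have hh2 : h ≤ 1/2 := min_le_left _ _
    have hhl : h / (2 * l) ≤ δ / 2 := by
      have h1 : h ≤ l * δ := min_le_right _ _
      rw [div_le_div_iff₀ (by positivity) (by norm_num)]
      nlinarith
    -- every point of S is within δ of the compact set K
    set R : ℝ := Real.sqrt ((C + 1) / h) with hRdef
    have hK : IsCompact (closure (⇑e '' Metric.closedBall 0 R)) :=
      he_cpt.isCompact_closure_image_of_bounded Metric.isBounded_closedBall
    have hnear : ∀ y ∈ S, ∃ k ∈ closure (⇑e '' Metric.closedBall 0 R), dist y k ≤ δ := by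
      rintro y ⟨n, t, ht, rfl⟩
      obtain ⟨s, hs, hts, hus⟩ := havg n t ht h hh hh2
      refine ⟨e (u n s), subset_closure ⟨u n s, ?_, rfl⟩, ?_⟩
      · rw [Metric.mem_closedBall, dist_zero_right]
        rw [hRdef]
        rw [show ‖u n s‖ = Real.sqrt (‖u n s‖ ^ 2) by
          rw [Real.sqrt_sq (norm_nonneg _)]]
        exact Real.sqrt_le_sqrt hus
      · rw [dist_eq_norm]
        rcases le_total t s with hts' | hts'
        · have := key n t s ht.1 hts' hs.2 l hl
          rw [← norm_neg]
          simp only [neg_sub]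
          refine le_trans this ?_
          have : s - t ≤ h := by
            have := abs_le.1 hts
            linarith [this.1]
          calc (s - t) / (2 * l) + l / 2 * C ≤ h / (2 * l) + l / 2 * C := by
                gcongr
            _ ≤ δ / 2 + δ / 2 := add_le_add hhl hlC
            _ = δ := by ring
          
        · have := key n s t hs.1 hts' ht.2 l hl
          refine le_trans this ?_
          have : t - s ≤ h := by
            have := abs_le.1 hts
            linarith [this.2]
          calc (t - s) / (2 * l) + l / 2 * C ≤ h / (2 * l) + l / 2 * C := by
                gcongr
            _ ≤ δ / 2 + δ / 2 := add_le_add hhl hlC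
            _ = δ := by ring
    -- finite δ-net of K gives a finite ε-net of S
    obtain ⟨T, hTfin, hTcov⟩ :=
      (Metric.totallyBounded_iff.1 hK.totallyBounded) δ hδ
    refine ⟨T, hTfin, ?_⟩
    intro y hy
    obtain ⟨k, hk, hyk⟩ := hnear y hy
    obtain ⟨z, hz, hkz⟩ := by
      have := hTcov hk
      simp only [mem_iUnion, Metric.mem_ball] at this
      exact this
    simp only [mem_iUnion, Metric.mem_ball]
    refine ⟨z, hz, ?_⟩
    calc dist y z ≤ dist y k + dist k z := dist_triangle _ _ _
      _ < δ + δ := by exact add_lt_add_of_le_of_lt hyk hkz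
      _ < ε := by rw [hδdef]; linarith
  have hScl : IsCompact (closure S) :=
    TotallyBounded.isCompact_of_isClosed hS.closure isClosed_closure
  -- Arzelà–Ascoli
  haveI : CompactSpace (Icc (0:ℝ) 1) := isCompact_iff_compactSpace.1 isCompact_Icc
  let F : ℕ → BoundedContinuousFunction (Icc (0:ℝ) 1) Y := fun n =>
    BoundedContinuousFunction.mkOfCompact
      ⟨fun x => e (u n x.1), (hgc n).comp continuous_subtype_val⟩
  have hFval : ∀ n (x : Icc (0:ℝ) 1), F n x = e (u n x.1) := fun n x => rfl
  have hin : ∀ (f : BoundedContinuousFunction (Icc (0:ℝ) 1) Y) (x : Icc (0:ℝ) 1),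
      f ∈ range F → f x ∈ closure S := by
    rintro f x ⟨n, rfl⟩
    exact subset_closure ⟨n, x.1, x.2, rfl⟩
  have hequi : Equicontinuous ((↑) : range F → (Icc (0:ℝ) 1) → Y) := by
    apply UniformEquicontinuous.equicontinuous
    rw [Metric.uniformEquicontinuous_iff]
    intro ε hε
    set l : ℝ := ε / (2 * (C + 1)) with hldef
    have hl : 0 < l := by positivity
    have hlC : l / 2 * C < ε / 2 := by
      rw [hldef]
      rw [div_div, div_mul_eq_mul_div, div_lt_div_iff₀ (by positivity) (by norm_num)]
      nlinarith
    refine ⟨l * ε, by positivity, ?_⟩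
    rintro x y hxy ⟨f, n, rfl⟩
    have hd : dist x y = |x.1 - y.1| := by
      rw [Subtype.dist_eq, Real.dist_eq]
    have hbnd : dist (F n x) (F n y) ≤ |x.1 - y.1| / (2 * l) + l / 2 * C := by
      rw [hFval, hFval, dist_eq_norm]
      rcases le_total x.1 y.1 with hxy' | hxy'
      · rw [← norm_neg]; simp only [neg_sub]
        have hkey := key n x.1 y.1 x.2.1 hxy' y.2.2 l hl
        have habs : |x.1 - y.1| = y.1 - x.1 := by
          rw [abs_sub_comm, abs_of_nonneg (by linarith : (0:ℝ) ≤ y.1 - x.1)]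
        rw [habs]; exact hkey
      · have hkey := key n y.1 x.1 y.2.1 hxy' x.2.2 l hl
        have habs : |x.1 - y.1| = x.1 - y.1 :=
          abs_of_nonneg (by linarith : (0:ℝ) ≤ x.1 - y.1)
        rw [habs]; exact hkey
    have h1 : |x.1 - y.1| / (2 * l) < ε / 2 := by
      rw [hd] at hxy
      rw [div_lt_div_iff₀ (by positivity) (by norm_num)]
      nlinarith [abs_nonneg (x.1 - y.1)]
    calc dist (F n x) (F n y) ≤ |x.1 - y.1| / (2 * l) + l / 2 * C := hbnd
      _ < ε / 2 + ε / 2 := add_lt_add h1 hlC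
      _ = ε := by ring
  have hcpt : IsCompact (closure (range F)) :=
    BoundedContinuousFunction.arzela_ascoli (closure S) hScl (range F) hin hequi
  obtain ⟨f₀, _, φ, hφ, hconv⟩ :=
    hcpt.tendsto_subseq (fun n => subset_closure (mem_range_self n))
  refine ⟨φ, hφ, ?_⟩
  intro ε hε
  have hsε : 0 < Real.sqrt ε / 2 := by positivity
  obtain ⟨N, hN⟩ := (Metric.tendsto_atTop.1 hconv) (Real.sqrt ε / 2) hsε
  refine ⟨N, fun p hp q hq => ?_⟩
  have hd : dist (F (φ p)) (F (φ q)) < Real.sqrt ε := by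
    calc dist (F (φ p)) (F (φ q)) ≤ dist (F (φ p)) f₀ + dist f₀ (F (φ q)) := dist_triangle _ _ _
      _ = dist ((F ∘ φ) p) f₀ + dist ((F ∘ φ) q) f₀ := by rw [dist_comm f₀]; rfl
      _ < Real.sqrt ε / 2 + Real.sqrt ε / 2 := add_lt_add (hN p hp) (hN q hq)
      _ = Real.sqrt ε := by ring
  have hcont : Continuous (fun t => ‖e (u (φ p) t) - e (u (φ q) t)‖ ^ 2) := by
    have := (hgc (φ p)).sub (hgc (φ q))
    exact (this.norm).pow 2
  have hle : ∀ t ∈ Icc (0:ℝ) 1,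
      ‖e (u (φ p) t) - e (u (φ q) t)‖ ^ 2 ≤ (dist (F (φ p)) (F (φ q))) ^ 2 := by
    intro t ht
    have h1 : dist (F (φ p) ⟨t, ht⟩) (F (φ q) ⟨t, ht⟩) ≤ dist (F (φ p)) (F (φ q)) :=
      BoundedContinuousFunction.dist_coe_le_dist _
    rw [hFval, hFval, dist_eq_norm] at h1
    exact pow_le_pow_left₀ (norm_nonneg _) h1 2
  calc (∫ t in (0:ℝ)..1, ‖e (u (φ p) t) - e (u (φ q) t)‖ ^ 2)
      ≤ ∫ _t in (0:ℝ)..1, (dist (F (φ p)) (F (φ q))) ^ 2 :=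
        intervalIntegral.integral_mono_on zero_le_one
          (hcont.intervalIntegrable 0 1) intervalIntegrable_const hle
    _ = (dist (F (φ p)) (F (φ q))) ^ 2 := by simp
    _ < ε := by
        have h0 : (0:ℝ) ≤ dist (F (φ p)) (F (φ q)) := dist_nonneg
        calc (dist (F (φ p)) (F (φ q))) ^ 2 < (Real.sqrt ε) ^ 2 := by
              exact pow_lt_pow_left₀ hd h0 (by norm_num)
          _ = ε := Real.sq_sqrt hε.le
end

section
/- Suppose the a priori estimate ‖u;𝒳(0,1)‖ ≤ C(‖ℒu;𝒴(-1,2)‖ + ‖u;𝒴(-1,2)‖) holds for all u ∈ 𝒳(-1,2), where ℒ = D_t + A(t). Then for every λ ∈ ℂ and every 1-periodic function u ∈ 𝒳̂, one has (∫₀¹(‖u(t)‖_X² + ‖(D_t+λ)u(t)‖_Y²)dt)^{1/2} ≤ C e^{|Re λ|} (‖(ℒ+λ)u;𝒴̂‖ + ‖u;𝒴̂‖). -/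
open MeasureTheory

open Filter Topology TopologicalSpace Set Function

set_option maxHeartbeats 1600000
set_option synthInstance.maxHeartbeats 400000

noncomputable section Stmt1Helpers

lemma sm_normsq {Z : Type*} [NormedAddCommGroup Z] {z : ℝ → Z}
    (hz : StronglyMeasurable z) : StronglyMeasurable (fun t => ‖z t‖ ^ 2) := by
  simp only [pow_two]
  exact hz.norm.mul hz.norm

lemma my_sqrt_add_le (a b : ℝ) (ha : 0 ≤ a) (hb : 0 ≤ b) :
    Real.sqrt (a + b) ≤ Real.sqrt a + Real.sqrt b := by
  have h1 : Real.sqrt (a + b) ≤ Real.sqrt ((Real.sqrt a + Real.sqrt b) ^ 2) := by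
    apply Real.sqrt_le_sqrt
    have h2 := Real.sq_sqrt ha
    have h3 := Real.sq_sqrt hb
    nlinarith [Real.sqrt_nonneg a, Real.sqrt_nonneg b]
  rwa [Real.sqrt_sq (by positivity)] at h1

lemma my_per3 (f : ℝ → ℝ) (hf : ∀ t, f (t + 1) = f t)
    (hfI : ∀ a b : ℝ, IntervalIntegrable f MeasureTheory.volume a b) :
    ∫ t in (-1:ℝ)..2, f t = 3 * ∫ t in (0:ℝ)..1, f t := by
  have h1 : ∫ t in (-1:ℝ)..0, f t = ∫ t in (0:ℝ)..1, f t := by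
    have h := intervalIntegral.integral_comp_add_right (a := (0:ℝ)) (b := 1) f (-1)
    rw [show (0:ℝ) + -1 = -1 by norm_num, show (1:ℝ) + -1 = 0 by norm_num] at h
    rw [← h]
    apply intervalIntegral.integral_congr
    intro x _
    have h2 := hf (x + -1)
    norm_num at h2
    simpa using h2.symm
  have h2 : ∫ t in (1:ℝ)..2, f t = ∫ t in (0:ℝ)..1, f t := by
    have h := intervalIntegral.integral_comp_add_right (a := (0:ℝ)) (b := 1) f 1
    rw [show (0:ℝ) + 1 = 1 by norm_num, show (1:ℝ) + 1 = 2 by norm_num] at h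
    rw [← h]
    apply intervalIntegral.integral_congr
    intro x _
    simpa using hf x
  have h3 := intervalIntegral.integral_add_adjacent_intervals (hfI (-1) 0) (hfI 0 1)
  have h4 := intervalIntegral.integral_add_adjacent_intervals (hfI (-1) 1) (hfI 1 2)
  linarith

variable {X Y : Type*} [NormedAddCommGroup X] [InnerProductSpace ℂ X] [CompleteSpace X]
  [NormedAddCommGroup Y] [InnerProductSpace ℂ Y] [CompleteSpace Y]

local notation "⟪" x ", " y "⟫" => @inner ℂ _ _ x y

/-- If `e` is an injective continuous linear map between Hilbert spaces and `e ∘ u` is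
continuous, then `u` is strongly measurable. -/
lemma sm_of_comp_continuous (e : X →L[ℂ] Y) (he_inj : Function.Injective e)
    (u : ℝ → X) (hg : Continuous fun t => e (u t)) : StronglyMeasurable u := by
  classical
  -- density of the range of the adjoint
  set ea : Y →L[ℂ] X := ContinuousLinearMap.adjoint e with headef
  have hdense : ∀ x : X, ∀ ε : ℝ, 0 < ε → ∃ y : Y, ‖ea y - x‖ < ε := by
    have horth : (LinearMap.range (ea : Y →ₗ[ℂ] X))ᗮ = ⊥ := by
      rw [Submodule.eq_bot_iff]
      intro x hx
      rw [Submodule.mem_orthogonal] at hx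
      have h1 : e x = 0 := by
        have h2 := hx (ea (e x)) (LinearMap.mem_range_self _ _)
        rw [headef, ContinuousLinearMap.adjoint_inner_left] at h2
        exact inner_self_eq_zero.mp h2
      exact he_inj (h1.trans (map_zero e).symm)
    have htop := Submodule.topologicalClosure_eq_top_iff.mpr horth
    intro x ε hε
    have hx : x ∈ closure ((LinearMap.range (ea : Y →ₗ[ℂ] X) : Submodule ℂ X) : Set X) := by
      rw [← Submodule.topologicalClosure_coe, htop]; trivial
    rcases Metric.mem_closure_iff.mp hx ε hε with ⟨z, ⟨y, rfl⟩, hd⟩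
    exact ⟨y, by rwa [← dist_eq_norm, dist_comm]⟩
  -- countable set of "locally bounded" sample values
  set pick : ℚ → ℚ → ℕ → ℝ := fun q q' k =>
    if h : ∃ s : ℝ, (q : ℝ) < s ∧ s < (q' : ℝ) ∧ ‖u s‖ ≤ (k : ℝ) then h.choose else 0
    with hpickdef
  set DD : Set X := Set.range (fun p : ℚ × ℚ × ℕ => u (pick p.1 p.2.1 p.2.2)) with hDDdef
  have hDDc : DD.Countable := Set.countable_range _
  set M : Submodule ℂ X := Submodule.span ℂ DD with hMdef
  have hWsep : IsSeparable (M.topologicalClosure : Set X) := by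
    have h1 : IsSeparable (M : Set X) := hDDc.isSeparable.span
    rw [Submodule.topologicalClosure_coe]
    exact h1.closure
  have hmem : ∀ t, u t ∈ M.topologicalClosure := by
    intro t
    rw [← Submodule.orthogonal_orthogonal_eq_closure, Submodule.mem_orthogonal]
    intro q hq
    set K : ℕ := ⌈‖u t‖⌉₊ with hKdef
    have hKt : ‖u t‖ ≤ (K : ℝ) := Nat.le_ceil _
    have hseq : ∀ n : ℕ, ∃ s : ℝ, |s - t| ≤ 1 / (n + 1) ∧ ‖u s‖ ≤ (K : ℝ) ∧ u s ∈ DD := by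
      intro n
      have hpos : (0 : ℝ) < 1 / (n + 1) := by positivity
      obtain ⟨q1, hq1a, hq1b⟩ := exists_rat_btwn (show t - 1 / (n + 1) < t by linarith)
      obtain ⟨q2, hq2a, hq2b⟩ := exists_rat_btwn (show t < t + 1 / (n + 1) by linarith)
      have hex : ∃ s : ℝ, (q1 : ℝ) < s ∧ s < (q2 : ℝ) ∧ ‖u s‖ ≤ (K : ℝ) := ⟨t, hq1b, hq2a, hKt⟩
      have hpeq : pick q1 q2 K = hex.choose := by
        simp only [hpickdef]
        exact dif_pos hex
      refine ⟨pick q1 q2 K, ?_, ?_, ⟨(q1, q2, K), rfl⟩⟩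
      · have hs := hex.choose_spec
        rw [hpeq, abs_sub_le_iff]
        constructor <;> nlinarith [hs.1, hs.2.1]
      · rw [hpeq]; exact hex.choose_spec.2.2
    choose s hs1 hs2 hs3 using hseq
    have hst : Tendsto s atTop (nhds t) := by
      rw [tendsto_iff_dist_tendsto_zero]
      apply squeeze_zero (fun n => dist_nonneg) (fun n => ?_)
        tendsto_one_div_add_atTop_nhds_zero_nat
      rw [Real.dist_eq]; exact hs1 n
    have hzero : ∀ n, ⟪q, u (s n)⟫ = 0 := by
      intro n
      have hmemM : u (s n) ∈ M := Submodule.subset_span (hs3 n)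
      have h0 := hq (u (s n)) hmemM
      rwa [inner_eq_zero_symm] at h0
    have hlim : Tendsto (fun n => ⟪q, u (s n)⟫) atTop (nhds ⟪q, u t⟫) := by
      rw [Metric.tendsto_atTop]
      intro ε hε
      set B : ℝ := (K : ℝ) + ‖u t‖ + 1 with hBdef
      have hBpos : 0 < B := by positivity
      obtain ⟨y, hy⟩ := hdense q (ε / (2 * B)) (by positivity)
      have hcv : Tendsto (fun n => ⟪y, e (u (s n)) - e (u t)⟫) atTop (nhds 0) := by
        have h1 : Tendsto (fun n => e (u (s n))) atTop (nhds (e (u t))) :=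
          (hg.tendsto t).comp hst
        have h2 : Tendsto (fun n => e (u (s n)) - e (u t)) atTop
            (nhds (e (u t) - e (u t))) := h1.sub tendsto_const_nhds
        rw [sub_self] at h2
        have h3 := Filter.Tendsto.inner (𝕜 := ℂ) (tendsto_const_nhds (x := y)) h2
        simpa only [inner_zero_right] using h3
      rw [Metric.tendsto_atTop] at hcv
      obtain ⟨N, hN⟩ := hcv (ε / 2) (by positivity)
      refine ⟨N, fun n hn => ?_⟩
      have h4 := hN n hn
      rw [dist_eq_norm] at h4 ⊢
      simp only [sub_zero] at h4
      have key : ⟪q, u (s n)⟫ - ⟪q, u t⟫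
          = ⟪q - ea y, u (s n) - u t⟫ + ⟪y, e (u (s n)) - e (u t)⟫ := by
        have h5 : ⟪ea y, u (s n) - u t⟫ = ⟪y, e (u (s n)) - e (u t)⟫ := by
          rw [headef, ContinuousLinearMap.adjoint_inner_left, map_sub]
        rw [← h5, inner_sub_left, inner_sub_right, inner_sub_right]
        ring
      rw [key]
      have h6 : ‖⟪q - ea y, u (s n) - u t⟫‖ ≤ ‖q - ea y‖ * ‖u (s n) - u t‖ :=
        norm_inner_le_norm _ _
      have h7 : ‖u (s n) - u t‖ ≤ B := by
        have := norm_sub_le (u (s n)) (u t)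
        have := hs2 n
        simp only [hBdef]
        nlinarith [norm_sub_le (u (s n)) (u t), hs2 n]
      have h8 : ‖q - ea y‖ ≤ ε / (2 * B) := by rw [norm_sub_rev]; exact hy.le
      have h9 : ‖⟪q - ea y, u (s n) - u t⟫‖ ≤ ε / 2 := by
        calc ‖⟪q - ea y, u (s n) - u t⟫‖ ≤ ‖q - ea y‖ * ‖u (s n) - u t‖ := h6
          _ ≤ (ε / (2 * B)) * B := by
              apply mul_le_mul h8 h7 (norm_nonneg _) (by positivity)
          _ = ε / 2 := by field_simp
      calc ‖⟪q - ea y, u (s n) - u t⟫ + ⟪y, e (u (s n)) - e (u t)⟫‖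
          ≤ ‖⟪q - ea y, u (s n) - u t⟫‖ + ‖⟪y, e (u (s n)) - e (u t)⟫‖ := norm_add_le _ _
        _ < ε := by linarith
    have hconst : Tendsto (fun n => ⟪q, u (s n)⟫) atTop (nhds 0) := by
      simp only [hzero]
      exact tendsto_const_nhds
    exact (tendsto_nhds_unique hlim hconst)
  -- Lusin–Souslin: measurable embedding of the separable closed subspace
  borelize X Y
  set V : Set X := (M.topologicalClosure : Set X) with hVdef
  have hVclosed : IsClosed V := M.isClosed_topologicalClosure
  haveI : SeparableSpace V := hWsep.separableSpace
  haveI : CompleteSpace V := hVclosed.completeSpace_coe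
  set Y₀ : Set Y := closure (e '' V) with hY0def
  have hY₀sep : IsSeparable Y₀ := (hWsep.image e.continuous).closure
  haveI : SeparableSpace Y₀ := hY₀sep.separableSpace
  haveI : CompleteSpace Y₀ := isClosed_closure.completeSpace_coe
  set e₀ : V → Y₀ := fun x => ⟨e x, subset_closure ⟨x.1, x.2, rfl⟩⟩ with he₀def
  have he₀cont : Continuous e₀ :=
    Continuous.subtype_mk (e.continuous.comp continuous_subtype_val) _
  have he₀inj : Function.Injective e₀ := by
    intro a b hab
    exact Subtype.ext (he_inj (congrArg Subtype.val hab))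
  have hemb : MeasurableEmbedding e₀ := he₀cont.measurableEmbedding he₀inj
  set u₀ : ℝ → V := fun t => ⟨u t, hmem t⟩ with hu₀def
  have h1 : Measurable (e₀ ∘ u₀) := by
    have hc : Continuous (fun t => (⟨e (u t), subset_closure ⟨u t, hmem t, rfl⟩⟩ : Y₀)) :=
      Continuous.subtype_mk hg _
    exact hc.measurable
  have h2 : Measurable u₀ := hemb.measurable_comp_iff.mp h1
  have h3 : Measurable u := continuous_subtype_val.measurable.comp h2
  rw [stronglyMeasurable_iff_measurable_separable]
  exact ⟨h3, hWsep.mono (range_subset_iff.mpr hmem)⟩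

end Stmt1Helpers

/-- the local a priori estimate (1a) for `ℒ = D_t + A(t)` implies the
parameter-dependent estimate for `(ℒ + λ)` on 1-periodic functions, with constant
`C' * exp |Re λ|`. -/
theorem stmt1
    {X Y : Type*} [NormedAddCommGroup X] [InnerProductSpace ℂ X] [CompleteSpace X]
    [NormedAddCommGroup Y] [InnerProductSpace ℂ Y] [CompleteSpace Y]
    (e : X →L[ℂ] Y) (he_inj : Function.Injective e) (he_dense : DenseRange e)
    (he_cpt : IsCompactOperator e)
    (A : ℝ → X →L[ℂ] Y) (hAcont : Continuous A) (hAper : ∀ t, A (t + 1) = A t)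
    (C : ℝ)
    -- the a priori estimate (1a): ‖u;𝒳(0,1)‖ ≤ C(‖ℒu;𝒴(-1,2)‖ + ‖u;𝒴(-1,2)‖)
    (hest : ∀ (u : ℝ → X) (u' : ℝ → Y),
      (∀ t, HasDerivAt (fun s => e (u s)) (u' t) t) →
      (∀ a b : ℝ, IntervalIntegrable (fun t => ‖u t‖ ^ 2 + ‖u' t‖ ^ 2) volume a b) →
      Real.sqrt (∫ t in (0:ℝ)..1, (‖u t‖ ^ 2 + ‖u' t‖ ^ 2)) ≤
        C * (Real.sqrt (∫ t in (-1:ℝ)..2, ‖u' t + A t (u t)‖ ^ 2) +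
             Real.sqrt (∫ t in (-1:ℝ)..2, ‖e (u t)‖ ^ 2))) :
    ∃ C' > 0, ∀ (lam : ℂ) (u : ℝ → X) (u' : ℝ → Y),
      Function.Periodic u 1 →
      (∀ t, HasDerivAt (fun s => e (u s)) (u' t) t) →
      (∀ a b : ℝ, IntervalIntegrable (fun t => ‖u t‖ ^ 2 + ‖u' t‖ ^ 2) volume a b) →
      Real.sqrt (∫ t in (0:ℝ)..1, (‖u t‖ ^ 2 + ‖u' t + lam • e (u t)‖ ^ 2)) ≤
        C' * Real.exp |lam.re| *
          (Real.sqrt (∫ t in (0:ℝ)..1, ‖u' t + A t (u t) + lam • e (u t)‖ ^ 2) +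
           Real.sqrt (∫ t in (0:ℝ)..1, ‖e (u t)‖ ^ 2)) := by
  refine ⟨8 * (|C| + 1), by positivity, ?_⟩
  intro lam u u' hper hd hint
  -- continuity and measurability of the basic objects
  have hgcont : Continuous (fun t => e (u t)) := by
    rw [continuous_iff_continuousAt]; intro t; exact (hd t).continuousAt
  have husm : StronglyMeasurable u := sm_of_comp_continuous e he_inj u hgcont
  have hu'sm : StronglyMeasurable u' := by
    have h0 : u' = fun t => deriv (fun s => e (u s)) t := funext fun t => ((hd t).deriv).symm
    rw [h0]
    exact stronglyMeasurable_deriv _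
  have hAusm : StronglyMeasurable (fun t => A t (u t)) := by
    have hpair : StronglyMeasurable (fun t => (A t, u t)) :=
      hAcont.stronglyMeasurable.prodMk husm
    exact isBoundedBilinearMap_apply.continuous.comp_stronglyMeasurable hpair
  -- periodicity of the derivative
  have hu'per : ∀ t, u' (t + 1) = u' t := by
    intro t
    have h1 : HasDerivAt (fun s : ℝ => s + 1) 1 t := (hasDerivAt_id t).add_const 1
    have h2 := HasDerivAt.scomp t (hd (t + 1)) h1
    have h3 : (fun s : ℝ => e (u (s + 1))) = fun s => e (u s) :=
      funext fun s => by rw [hper s]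
    have h4 : HasDerivAt (fun s => e (u s)) (u' (t + 1)) t := by
      simp only [Function.comp_def] at h2
      rw [h3] at h2
      simpa using h2
    exact h4.unique (hd t)
  -- notation
  set σ : ℝ := lam.re with hσdef
  set μc : ℂ := lam - (σ : ℂ) with hμdef
  have hμre : μc.re = 0 := by
    rw [hμdef, Complex.sub_re, Complex.ofReal_re, hσdef, sub_self]
  have hlam_mu : ∀ z : Y, lam • z = μc • z + (σ : ℂ) • z := by
    intro z; rw [hμdef, sub_smul]; abel
  have hmu_lam : ∀ z : Y, μc • z = lam • z + (-(σ : ℂ)) • z := by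
    intro z; rw [hμdef, sub_smul, neg_smul]; abel
  have hnσ : ‖(σ : ℂ)‖ ^ 2 = σ ^ 2 := by
    rw [Complex.norm_real, Real.norm_eq_abs, sq_abs]
  have hnσ' : ‖(-(σ : ℂ))‖ ^ 2 = σ ^ 2 := by rw [norm_neg]; exact hnσ
  -- square function helpers
  have sq2 : ∀ x y : Y, ‖x + y‖ ^ 2 ≤ 2 * ‖x‖ ^ 2 + 2 * ‖y‖ ^ 2 := by
    intro x y
    have h2 : ‖x + y‖ ^ 2 ≤ (‖x‖ + ‖y‖) ^ 2 :=
      pow_le_pow_left₀ (norm_nonneg _) (norm_add_le x y) 2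
    nlinarith [sq_nonneg (‖x‖ - ‖y‖)]
  have sqsmul : ∀ (c : ℂ) (x y : Y), ‖x + c • y‖ ^ 2 ≤ 2 * ‖x‖ ^ 2 + 2 * (‖c‖ ^ 2 * ‖y‖ ^ 2) := by
    intro c x y
    have h := sq2 x (c • y)
    rwa [norm_smul, mul_pow] at h
  -- the integrand functions
  set EE : ℝ → ℝ := fun t => ‖e (u t)‖ ^ 2 with hEdef
  set f2 : ℝ → ℝ := fun t => ‖u t‖ ^ 2 + ‖u' t + lam • e (u t)‖ ^ 2 with hf2def
  set w2 : ℝ → ℝ := fun t => ‖u' t + A t (u t) + lam • e (u t)‖ ^ 2 with hw2def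
  set f1 : ℝ → ℝ := fun t => ‖u t‖ ^ 2 + ‖u' t + μc • e (u t)‖ ^ 2 with hf1def
  set rr : ℝ → ℝ := fun t => ‖u' t + A t (u t) + μc • e (u t)‖ ^ 2 with hrrdef
  -- basic integrability
  have hEcont : Continuous EE := by simp only [hEdef]; exact (hgcont.norm).pow 2
  have hEI : ∀ a b : ℝ, IntervalIntegrable EE volume a b := fun a b =>
    hEcont.intervalIntegrable a b
  have domII : ∀ (z D : ℝ → ℝ), StronglyMeasurable z → (∀ t, 0 ≤ z t) → (∀ t, z t ≤ D t) →
      (∀ a b : ℝ, IntervalIntegrable D volume a b) →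
      ∀ a b : ℝ, IntervalIntegrable z volume a b := by
    intro z D hz hz0 hzD hD a b
    apply (hD a b).mono_fun' hz.aestronglyMeasurable
    filter_upwards with t
    simpa [Real.norm_eq_abs, abs_of_nonneg (hz0 t)] using hzD t
  have hu2I : ∀ a b : ℝ, IntervalIntegrable (fun t => ‖u t‖ ^ 2) volume a b :=
    domII _ _ (sm_normsq husm) (fun t => by positivity)
      (fun t => by nlinarith [sq_nonneg ‖u' t‖]) hint
  have hu'2I : ∀ a b : ℝ, IntervalIntegrable (fun t => ‖u' t‖ ^ 2) volume a b :=
    domII _ _ (sm_normsq hu'sm) (fun t => by positivity)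
      (fun t => by nlinarith [sq_nonneg ‖u t‖]) hint
  have hAu2I : ∀ a b : ℝ, IntervalIntegrable (fun t => ‖A t (u t)‖ ^ 2) volume a b := by
    intro a b
    have hprod : IntervalIntegrable (fun t => ‖A t‖ ^ 2 * ‖u t‖ ^ 2) volume a b :=
      (hu2I a b).continuousOn_mul ((hAcont.norm.pow 2).continuousOn)
    apply hprod.mono_fun' (sm_normsq hAusm).aestronglyMeasurable
    filter_upwards with t
    have h1 := (A t).le_opNorm (u t)
    have h2 : ‖A t (u t)‖ ^ 2 ≤ (‖A t‖ * ‖u t‖) ^ 2 :=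
      pow_le_pow_left₀ (norm_nonneg _) h1 2
    rw [Real.norm_eq_abs, abs_of_nonneg (by positivity)]
    calc ‖A t (u t)‖ ^ 2 ≤ (‖A t‖ * ‖u t‖) ^ 2 := h2
      _ = ‖A t‖ ^ 2 * ‖u t‖ ^ 2 := mul_pow _ _ _
  -- integrability of the composite integrands
  have hz2sm : StronglyMeasurable (fun t => u' t + lam • e (u t)) :=
    hu'sm.add (hgcont.const_smul lam).stronglyMeasurable
  have hz1sm : StronglyMeasurable (fun t => u' t + μc • e (u t)) :=
    hu'sm.add (hgcont.const_smul μc).stronglyMeasurable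
  have hz3sm : StronglyMeasurable (fun t => u' t + A t (u t) + lam • e (u t)) :=
    (hu'sm.add hAusm).add (hgcont.const_smul lam).stronglyMeasurable
  have hz4sm : StronglyMeasurable (fun t => u' t + A t (u t) + μc • e (u t)) :=
    (hu'sm.add hAusm).add (hgcont.const_smul μc).stronglyMeasurable
  have hf2I : ∀ a b : ℝ, IntervalIntegrable f2 volume a b := by
    apply domII f2 (fun t => 2 * ‖u t‖ ^ 2 + 2 * ‖u' t‖ ^ 2 + 2 * ‖lam‖ ^ 2 * EE t)
      ((sm_normsq husm).add (sm_normsq hz2sm)) (fun t => by simp only [hf2def]; positivity)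
    · intro t
      simp only [hf2def, hEdef]
      have h := sqsmul lam (u' t) (e (u t))
      nlinarith [sq_nonneg ‖u t‖]
    · intro a b
      exact (((hu2I a b).const_mul 2).add ((hu'2I a b).const_mul 2)).add
        ((hEI a b).const_mul _)
  have hf1I : ∀ a b : ℝ, IntervalIntegrable f1 volume a b := by
    apply domII f1 (fun t => 2 * ‖u t‖ ^ 2 + 2 * ‖u' t‖ ^ 2 + 2 * ‖μc‖ ^ 2 * EE t)
      ((sm_normsq husm).add (sm_normsq hz1sm)) (fun t => by simp only [hf1def]; positivity)
    · intro t
      simp only [hf1def, hEdef]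
      have h := sqsmul μc (u' t) (e (u t))
      nlinarith [sq_nonneg ‖u t‖]
    · intro a b
      exact (((hu2I a b).const_mul 2).add ((hu'2I a b).const_mul 2)).add
        ((hEI a b).const_mul _)
  have hw2I : ∀ a b : ℝ, IntervalIntegrable w2 volume a b := by
    apply domII w2
      (fun t => 2 * (2 * ‖u' t‖ ^ 2 + 2 * ‖A t (u t)‖ ^ 2) + 2 * ‖lam‖ ^ 2 * EE t)
      (sm_normsq hz3sm) (fun t => by simp only [hw2def]; positivity)
    · intro t
      simp only [hw2def, hEdef]
      have h := sqsmul lam (u' t + A t (u t)) (e (u t))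
      have h2 := sq2 (u' t) (A t (u t))
      nlinarith
    · intro a b
      exact ((((hu'2I a b).const_mul 2).add ((hAu2I a b).const_mul 2)).const_mul 2).add
        ((hEI a b).const_mul _)
  have hrrI : ∀ a b : ℝ, IntervalIntegrable rr volume a b := by
    apply domII rr
      (fun t => 2 * (2 * ‖u' t‖ ^ 2 + 2 * ‖A t (u t)‖ ^ 2) + 2 * ‖μc‖ ^ 2 * EE t)
      (sm_normsq hz4sm) (fun t => by simp only [hrrdef]; positivity)
    · intro t
      simp only [hrrdef, hEdef]
      have h := sqsmul μc (u' t + A t (u t)) (e (u t))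
      have h2 := sq2 (u' t) (A t (u t))
      nlinarith
    · intro a b
      exact ((((hu'2I a b).const_mul 2).add ((hAu2I a b).const_mul 2)).const_mul 2).add
        ((hEI a b).const_mul _)
  -- periodicity of the integrands
  have hEper : ∀ t, EE (t + 1) = EE t := by
    intro t; simp only [hEdef]; rw [hper t]
  have hrrper : ∀ t, rr (t + 1) = rr t := by
    intro t; simp only [hrrdef]; rw [hper t, hu'per t, hAper t]
  -- the multiplier
  set φ : ℝ → ℂ := fun s => Complex.exp (μc * s) with hφdef
  have hφd : ∀ t : ℝ, HasDerivAt φ (μc * φ t) t := by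
    intro t
    have h0 : HasDerivAt (fun z : ℂ => μc * z) μc (t : ℂ) := by
      simpa using (hasDerivAt_id (t : ℂ)).const_mul μc
    have h1 : HasDerivAt (fun z : ℂ => Complex.exp (μc * z))
        (Complex.exp (μc * (t : ℂ)) * μc) (t : ℂ) := h0.cexp
    have h2 := h1.comp_ofReal
    simp only [hφdef]
    simpa [mul_comm] using h2
  have hφ1 : ∀ t : ℝ, ‖φ t‖ = 1 := by
    intro t
    simp only [hφdef, Complex.norm_exp]
    rw [show (μc * (t : ℂ)).re = 0 by
      simp [Complex.mul_re, hμre, Complex.ofReal_im]]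
    exact Real.exp_zero
  set v : ℝ → X := fun t => φ t • u t with hvdef
  set vd : ℝ → Y := fun t => φ t • (u' t + μc • e (u t)) with hvddef
  have hvd : ∀ t, HasDerivAt (fun s => e (v s)) (vd t) t := by
    intro t
    have h1 : (fun s => e (v s)) = fun s => φ s • e (u s) := by
      funext s
      simp only [hvdef]
      exact _root_.map_smul e _ _
    rw [h1]
    have h2 := (hφd t).smul (hd t)
    have h3 : φ t • u' t + (μc * φ t) • e (u t) = vd t := by
      simp only [hvddef]
      rw [smul_add, smul_smul, mul_comm]
    rw [← h3]
    exact h2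
  have hvint : ∀ a b : ℝ, IntervalIntegrable (fun t => ‖v t‖ ^ 2 + ‖vd t‖ ^ 2) volume a b := by
    intro a b
    have heq : (fun t => ‖v t‖ ^ 2 + ‖vd t‖ ^ 2) = f1 := by
      funext t
      simp only [hvdef, hvddef, hf1def]
      rw [norm_smul, norm_smul, hφ1 t]
      ring
    rw [heq]
    exact hf1I a b
  have hest1 := hest v vd hvd hvint
  -- rewrite the three integrals in hest1
  have hL : (∫ t in (0:ℝ)..1, (‖v t‖ ^ 2 + ‖vd t‖ ^ 2)) = ∫ t in (0:ℝ)..1, f1 t := by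
    apply intervalIntegral.integral_congr
    intro t _
    simp only [hvdef, hvddef, hf1def]
    rw [norm_smul, norm_smul, hφ1 t]
    ring
  have hR1 : (∫ t in (-1:ℝ)..2, ‖vd t + A t (v t)‖ ^ 2) = ∫ t in (-1:ℝ)..2, rr t := by
    apply intervalIntegral.integral_congr
    intro t _
    have hAv : A t (v t) = φ t • A t (u t) := by
      simp only [hvdef]
      exact _root_.map_smul (A t) _ _
    have hcomb : vd t + A t (v t) = φ t • (u' t + A t (u t) + μc • e (u t)) := by
      rw [hAv]
      simp only [hvddef]
      rw [← smul_add]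
      congr 1
      abel
    simp only
    rw [hcomb]
    simp only [hrrdef]
    rw [norm_smul, hφ1 t]
    ring
  have hR2 : (∫ t in (-1:ℝ)..2, ‖e (v t)‖ ^ 2) = ∫ t in (-1:ℝ)..2, EE t := by
    apply intervalIntegral.integral_congr
    intro t _
    simp only [hvdef, hEdef]
    rw [_root_.map_smul, norm_smul, hφ1 t]
    ring
  rw [hL, hR1, hR2] at hest1
  rw [my_per3 rr hrrper hrrI, my_per3 EE hEper hEI] at hest1
  -- nonnegativity of the integrals
  have hJ1nn : 0 ≤ ∫ t in (0:ℝ)..1, f1 t :=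
    intervalIntegral.integral_nonneg (by norm_num) (fun x _ => by simp only [hf1def]; positivity)
  have hJ2nn : 0 ≤ ∫ t in (0:ℝ)..1, f2 t :=
    intervalIntegral.integral_nonneg (by norm_num) (fun x _ => by simp only [hf2def]; positivity)
  have hJWnn : 0 ≤ ∫ t in (0:ℝ)..1, w2 t :=
    intervalIntegral.integral_nonneg (by norm_num) (fun x _ => by simp only [hw2def]; positivity)
  have hJEnn : 0 ≤ ∫ t in (0:ℝ)..1, EE t :=
    intervalIntegral.integral_nonneg (by norm_num) (fun x _ => by simp only [hEdef]; positivity)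
  have hJRnn : 0 ≤ ∫ t in (0:ℝ)..1, rr t :=
    intervalIntegral.integral_nonneg (by norm_num) (fun x _ => by simp only [hrrdef]; positivity)
  -- the main sqrt quantities
  set P : ℝ := Real.sqrt (∫ t in (0:ℝ)..1, f1 t) with hPdef
  set F : ℝ := Real.sqrt (∫ t in (0:ℝ)..1, w2 t) with hFdef
  set G : ℝ := Real.sqrt (∫ t in (0:ℝ)..1, EE t) with hGdef
  set Q : ℝ := Real.sqrt (∫ t in (0:ℝ)..1, rr t) with hQdef
  set N : ℝ := Real.sqrt (∫ t in (0:ℝ)..1, f2 t) with hNdef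
  have hPnn : 0 ≤ P := Real.sqrt_nonneg _
  have hFnn : 0 ≤ F := Real.sqrt_nonneg _
  have hGnn : 0 ≤ G := Real.sqrt_nonneg _
  have hQnn : 0 ≤ Q := Real.sqrt_nonneg _
  have hsnn : 0 ≤ |σ| := abs_nonneg _
  have hCnn : 0 ≤ |C| := abs_nonneg _
  -- numeric bounds on √2, √3
  have h2le : Real.sqrt 2 ≤ 2 := by
    nlinarith [Real.sq_sqrt (show (0:ℝ) ≤ 2 by norm_num), Real.sqrt_nonneg 2]
  have h3le : Real.sqrt 3 ≤ 2 := by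
    nlinarith [Real.sq_sqrt (show (0:ℝ) ≤ 3 by norm_num), Real.sqrt_nonneg 3]
  have h2nn : (0:ℝ) ≤ Real.sqrt 2 := Real.sqrt_nonneg _
  -- step 1 : hest1 in terms of P, Q, G
  have hest2 : P ≤ |C| * (Real.sqrt 3 * Q + Real.sqrt 3 * G) := by
    have h1 : Real.sqrt (3 * ∫ t in (0:ℝ)..1, rr t) = Real.sqrt 3 * Q := by
      rw [hQdef, Real.sqrt_mul (by norm_num)]
    have h2 : Real.sqrt (3 * ∫ t in (0:ℝ)..1, EE t) = Real.sqrt 3 * G := by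
      rw [hGdef, Real.sqrt_mul (by norm_num)]
    rw [hPdef]
    calc Real.sqrt (∫ t in (0:ℝ)..1, f1 t)
        ≤ C * (Real.sqrt (3 * ∫ t in (0:ℝ)..1, rr t) +
            Real.sqrt (3 * ∫ t in (0:ℝ)..1, EE t)) := hest1
      _ ≤ |C| * (Real.sqrt (3 * ∫ t in (0:ℝ)..1, rr t) +
            Real.sqrt (3 * ∫ t in (0:ℝ)..1, EE t)) := by
          apply mul_le_mul_of_nonneg_right (le_abs_self C)
          positivity
      _ = |C| * (Real.sqrt 3 * Q + Real.sqrt 3 * G) := by rw [h1, h2]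
  -- step 2 : Q ≤ √2 F + √2 |σ| G
  have hQle : Q ≤ Real.sqrt 2 * F + Real.sqrt 2 * (|σ| * G) := by
    have hmono : (∫ t in (0:ℝ)..1, rr t) ≤
        ∫ t in (0:ℝ)..1, (2 * w2 t + 2 * (σ ^ 2 * EE t)) := by
      apply intervalIntegral.integral_mono_on (by norm_num) (hrrI 0 1)
      · exact ((hw2I 0 1).const_mul 2).add (((hEI 0 1).const_mul _).const_mul 2)
      · intro t _
        simp only [hrrdef, hw2def, hEdef]
        have hsplit : u' t + A t (u t) + μc • e (u t)
            = (u' t + A t (u t) + lam • e (u t)) + (-(σ : ℂ)) • e (u t) := by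
          rw [hmu_lam (e (u t))]
          abel
        rw [hsplit]
        have h := sqsmul (-(σ : ℂ)) (u' t + A t (u t) + lam • e (u t)) (e (u t))
        rw [hnσ'] at h
        linarith
    have hsum : (∫ t in (0:ℝ)..1, (2 * w2 t + 2 * (σ ^ 2 * EE t)))
        = 2 * (∫ t in (0:ℝ)..1, w2 t) + 2 * (σ ^ 2 * ∫ t in (0:ℝ)..1, EE t) := by
      rw [intervalIntegral.integral_add ((hw2I 0 1).const_mul 2)
        (((hEI 0 1).const_mul _).const_mul 2)]
      rw [intervalIntegral.integral_const_mul, intervalIntegral.integral_const_mul,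
        intervalIntegral.integral_const_mul]
    calc Q ≤ Real.sqrt (2 * (∫ t in (0:ℝ)..1, w2 t) + 2 * (σ ^ 2 * ∫ t in (0:ℝ)..1, EE t)) := by
          rw [hQdef]
          apply Real.sqrt_le_sqrt
          rw [← hsum]
          exact hmono
      _ ≤ Real.sqrt (2 * ∫ t in (0:ℝ)..1, w2 t) +
          Real.sqrt (2 * (σ ^ 2 * ∫ t in (0:ℝ)..1, EE t)) := by
          apply my_sqrt_add_le _ _ (by positivity) (by positivity)
      _ = Real.sqrt 2 * F + Real.sqrt 2 * (|σ| * G) := by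
          rw [hFdef, hGdef, Real.sqrt_mul (by norm_num), Real.sqrt_mul (by norm_num),
            Real.sqrt_mul (sq_nonneg σ), Real.sqrt_sq_eq_abs]
  -- step 3 : N ≤ √2 P + √2 |σ| G
  have hNle : N ≤ Real.sqrt 2 * P + Real.sqrt 2 * (|σ| * G) := by
    have hmono : (∫ t in (0:ℝ)..1, f2 t) ≤
        ∫ t in (0:ℝ)..1, (2 * f1 t + 2 * (σ ^ 2 * EE t)) := by
      apply intervalIntegral.integral_mono_on (by norm_num) (hf2I 0 1)
      · exact ((hf1I 0 1).const_mul 2).add (((hEI 0 1).const_mul _).const_mul 2)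
      · intro t _
        simp only [hf2def, hf1def, hEdef]
        have hsplit : u' t + lam • e (u t)
            = (u' t + μc • e (u t)) + (σ : ℂ) • e (u t) := by
          rw [hlam_mu (e (u t))]
          abel
        rw [hsplit]
        have h := sqsmul ((σ : ℂ)) (u' t + μc • e (u t)) (e (u t))
        rw [hnσ] at h
        nlinarith [sq_nonneg ‖u t‖]
    have hsum : (∫ t in (0:ℝ)..1, (2 * f1 t + 2 * (σ ^ 2 * EE t)))
        = 2 * (∫ t in (0:ℝ)..1, f1 t) + 2 * (σ ^ 2 * ∫ t in (0:ℝ)..1, EE t) := by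
      rw [intervalIntegral.integral_add ((hf1I 0 1).const_mul 2)
        (((hEI 0 1).const_mul _).const_mul 2)]
      rw [intervalIntegral.integral_const_mul, intervalIntegral.integral_const_mul,
        intervalIntegral.integral_const_mul]
    calc N ≤ Real.sqrt (2 * (∫ t in (0:ℝ)..1, f1 t) + 2 * (σ ^ 2 * ∫ t in (0:ℝ)..1, EE t)) := by
          rw [hNdef]
          apply Real.sqrt_le_sqrt
          rw [← hsum]
          exact hmono
      _ ≤ Real.sqrt (2 * ∫ t in (0:ℝ)..1, f1 t) +
          Real.sqrt (2 * (σ ^ 2 * ∫ t in (0:ℝ)..1, EE t)) := by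
          apply my_sqrt_add_le _ _ (by positivity) (by positivity)
      _ = Real.sqrt 2 * P + Real.sqrt 2 * (|σ| * G) := by
          rw [hPdef, hGdef, Real.sqrt_mul (by norm_num), Real.sqrt_mul (by norm_num),
            Real.sqrt_mul (sq_nonneg σ), Real.sqrt_sq_eq_abs]
  -- final numeric assembly
  show N ≤ 8 * (|C| + 1) * Real.exp |σ| * (F + G)
  have c1 : Q ≤ 2 * F + 2 * (|σ| * G) := by
    have e1 : Real.sqrt 2 * F ≤ 2 * F := mul_le_mul_of_nonneg_right h2le hFnn
    have e2 : Real.sqrt 2 * (|σ| * G) ≤ 2 * (|σ| * G) :=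
      mul_le_mul_of_nonneg_right h2le (mul_nonneg hsnn hGnn)
    linarith
  have c2 : P ≤ |C| * (2 * Q + 2 * G) := by
    have e1 : Real.sqrt 3 * Q ≤ 2 * Q := mul_le_mul_of_nonneg_right h3le hQnn
    have e2 : Real.sqrt 3 * G ≤ 2 * G := mul_le_mul_of_nonneg_right h3le hGnn
    calc P ≤ |C| * (Real.sqrt 3 * Q + Real.sqrt 3 * G) := hest2
      _ ≤ |C| * (2 * Q + 2 * G) := by
          apply mul_le_mul_of_nonneg_left (by linarith) hCnn
  have c3 : P ≤ |C| * (2 * (2 * F + 2 * (|σ| * G)) + 2 * G) :=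
    c2.trans (mul_le_mul_of_nonneg_left (by linarith) hCnn)
  have c4 : N ≤ 2 * P + 2 * (|σ| * G) := by
    have e1 : Real.sqrt 2 * P ≤ 2 * P := mul_le_mul_of_nonneg_right h2le hPnn
    have e2 : Real.sqrt 2 * (|σ| * G) ≤ 2 * (|σ| * G) :=
      mul_le_mul_of_nonneg_right h2le (mul_nonneg hsnn hGnn)
    linarith
  have hNs : N ≤ 8 * (|C| + 1) * (1 + |σ|) * (F + G) := by
    nlinarith [mul_nonneg hsnn hFnn, mul_nonneg hsnn hGnn, mul_nonneg hCnn hFnn,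
      mul_nonneg hCnn hGnn, mul_nonneg hCnn (mul_nonneg hsnn hFnn),
      mul_nonneg hCnn (mul_nonneg hsnn hGnn), hFnn, hGnn]
  have hexp : 1 + |σ| ≤ Real.exp |σ| := by
    have := Real.add_one_le_exp |σ|
    linarith
  calc N ≤ 8 * (|C| + 1) * (1 + |σ|) * (F + G) := hNs
    _ ≤ 8 * (|C| + 1) * Real.exp |σ| * (F + G) := by
        have h1 : (0:ℝ) ≤ F + G := by linarith
        have h2 : (0:ℝ) ≤ 8 * (|C| + 1) := by positivity
        apply mul_le_mul_of_nonneg_right _ h1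
        apply mul_le_mul_of_nonneg_left hexp h2
end

section
/- Let φ^k_{j,m} and ψ^k_{j,m} be Jordan chains of 𝒜(λ) and 𝒜*(λ) at an eigenvalue λ_k satisfying the periodic (integrated) biorthogonality relations (φ^k_{j,m}, ψ^k_{J,m_{k,J}-1-M})_{𝒴̂} = δ_j^J δ_m^M. Then the pointwise orthogonality holds: for every t ∈ ℝ, (φ^k_{j,m_{k,j}-1-m}(t), ψ^k_{J,M}(t))_Y = δ_j^J δ_m^M. -/
/-!
Pairing a Jordan chain of the periodic problem with one of its adjoint, the derivative of
`⟪ψ_M(t), φ_m(t)⟫` is `⟪ψ_{M-1}(t), φ_m(t)⟫ - ⟪ψ_M(t), φ_{m-1}(t)⟫`: the operator `A(t)` and the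
eigenvalue cancel. By induction on `m + M` both lower pairings are already known to be the same
constant, so every pairing is constant in `t` and therefore equals its mean over a period, which is
prescribed by the integrated biorthogonality relations.
-/

section Pairing

variable {𝕜 Y : Type*} [RCLike 𝕜] [NormedAddCommGroup Y] [InnerProductSpace 𝕜 Y] [NormedSpace ℝ Y]

local notation "⟪" x ", " y "⟫" => inner 𝕜 x y

theorem hasDerivAt_inner_of_jordan {f w : ℝ → Y} {f' w' a p q : Y} {lam : 𝕜} {t : ℝ}
    (hf : HasDerivAt f f' t) (hw : HasDerivAt w w' t)
    (hf_eq : f' + a + lam • f t + p = 0)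
    (hw_eq : ⟪w', f t⟫ = ⟪w t, a⟫ + lam * ⟪w t, f t⟫ + ⟪q, f t⟫) :
    HasDerivAt (fun s => ⟪w s, f s⟫) (⟪q, f t⟫ - ⟪w t, p⟫) t := by
  convert hw.inner 𝕜 hf using 1
  have h : ⟪w t, f' + a + lam • f t + p⟫ = 0 := by rw [hf_eq, inner_zero_right]
  simp only [inner_add_right, inner_smul_right] at h
  linear_combination -h - hw_eq

end Pairing

theorem intervalIntegral_eq_of_hasDerivAt_zero {E : Type*} [NormedAddCommGroup E]
    [NormedSpace ℝ E] [CompleteSpace E] {G : ℝ → E} (hG : ∀ u, HasDerivAt G 0 u) (a b t : ℝ) :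
    ∫ u in a..b, G u = (b - a) • G t := by
  have hconst : ∀ u, G u = G t := fun u =>
    is_const_of_deriv_eq_zero (fun x => (hG x).differentiableAt) (fun x => (hG x).deriv) u t
  simp only [hconst, intervalIntegral.integral_const]

theorem eq_of_hasDerivAt_jordan_pairing {n N : ℕ} {G : ℕ → ℕ → ℝ → ℂ} {δ : ℕ → ℕ → ℂ}
    (hderiv : ∀ m M, m < n → M < N → ∀ u, HasDerivAt (G m M)
      ((if M = 0 then 0 else G m (M - 1) u) - (if m = 0 then 0 else G (m - 1) M u)) u)
    (hmean : ∀ m M, m < n → M < N → ∫ u in (0 : ℝ)..1, G m M u = δ m M)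
    (hδ : ∀ m M, m < n → M < N →
      (if M = 0 then 0 else δ m (M - 1)) = (if m = 0 then 0 else δ (m - 1) M))
    {m M : ℕ} (hm : m < n) (hM : M < N) (t : ℝ) :
    G m M t = δ m M := by
  induction hs : m + M using Nat.strong_induction_on generalizing m M t with
  | _ s ih =>
  have hlower : ∀ u,
      (if M = 0 then 0 else G m (M - 1) u) = (if m = 0 then 0 else G (m - 1) M u) := by
    intro u
    convert hδ m M hm hM using 1 <;> split_ifs <;>
      first | rfl | exact ih _ (by omega) (by omega) (by omega) u rfl
  have hconst : ∀ u, HasDerivAt (G m M) 0 u := fun u => by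
    simpa only [hlower, sub_self] using hderiv m M hm hM u
  rw [← hmean m M hm hM, intervalIntegral_eq_of_hasDerivAt_zero hconst 0 1 t, sub_zero, one_smul]

theorem stmt8_general
    {X Y : Type*} [NormedAddCommGroup X] [InnerProductSpace ℂ X]
    [NormedAddCommGroup Y] [InnerProductSpace ℂ Y]
    (e : X →L[ℂ] Y) (A : ℝ → X →L[ℂ] Y) (lamk : ℂ) (Jn : ℕ) (mlen : Fin Jn → ℕ)
    (φ : Fin Jn → ℕ → ℝ → X) (φ' : Fin Jn → ℕ → ℝ → Y)
    (ψ ψ' : Fin Jn → ℕ → ℝ → Y)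
    (hφderiv : ∀ j mm, mm < mlen j → ∀ t, HasDerivAt (fun s => e (φ j mm s)) (φ' j mm t) t)
    (hψderiv : ∀ j mm, mm < mlen j → ∀ t, HasDerivAt (ψ j mm) (ψ' j mm t) t)
    -- Jordan chain equations for 𝒜(λ_k):
    (hφchain : ∀ j mm, mm < mlen j → ∀ t,
      φ' j mm t + A t (φ j mm t) + lamk • e (φ j mm t)
        + (if mm = 0 then 0 else e (φ j (mm - 1) t)) = 0)
    -- Jordan chain equations for 𝒜*(λ_k), tested against X:
    (hψchain : ∀ j mm, mm < mlen j → ∀ (x : X) (t : ℝ),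
      (inner ℂ (ψ' j mm t) (e x) : ℂ) =
        (inner ℂ (ψ j mm t) ((A t x : Y)) : ℂ) + lamk * (inner ℂ (ψ j mm t) (e x) : ℂ)
          + (inner ℂ (if mm = 0 then (0 : Y) else ψ j (mm - 1) t) (e x) : ℂ))
    -- integrated biorthogonality (4.14):
    (hbi : ∀ j J mm MM, mm < mlen j → MM < mlen J →
      (∫ t in (0:ℝ)..1, (inner ℂ (ψ J (mlen J - 1 - MM) t) (e (φ j mm t)) : ℂ)) =
        if j = J ∧ mm = MM then 1 else 0) :
    ∀ j J mm MM, mm < mlen j → MM < mlen J → ∀ t : ℝ,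
      (inner ℂ (ψ J MM t) (e (φ j (mlen j - 1 - mm) t)) : ℂ) =
        if j = J ∧ mm = MM then 1 else 0 := by
  intro j J mm MM hmm hMM t
  have hderiv : ∀ m M, m < mlen j → M < mlen J → ∀ u,
      HasDerivAt (fun s => (inner ℂ (ψ J M s) (e (φ j m s)) : ℂ))
        ((if M = 0 then 0 else inner ℂ (ψ J (M - 1) u) (e (φ j m u)))
          - (if m = 0 then 0 else inner ℂ (ψ J M u) (e (φ j (m - 1) u)))) u := by
    intro m M hm hM u
    refine (hasDerivAt_inner_of_jordan (hφderiv j m hm u) (hψderiv J M hM u)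
      (hφchain j m hm u) (hψchain J M hM (φ j m u) u)).congr_deriv ?_
    split_ifs <;> simp
  have hmean : ∀ m M, m < mlen j → M < mlen J →
      ∫ u in (0 : ℝ)..1, (inner ℂ (ψ J M u) (e (φ j m u)) : ℂ) =
        if j = J ∧ m + M + 1 = mlen j then 1 else 0 := by
    intro m M hm hM
    have h := hbi j J m (mlen J - 1 - M) hm (by omega)
    rw [Nat.sub_sub_self (by omega : M ≤ mlen J - 1)] at h
    rw [h]
    refine if_congr ?_ rfl rfl
    constructor <;> rintro ⟨rfl, h⟩ <;> exact ⟨rfl, by omega⟩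
  have hδ : ∀ m M, m < mlen j → M < mlen J →
      (if M = 0 then 0 else if j = J ∧ m + (M - 1) + 1 = mlen j then (1 : ℂ) else 0) =
        (if m = 0 then 0 else if j = J ∧ m - 1 + M + 1 = mlen j then 1 else 0) := by
    intro m M hm hM
    rcases eq_or_ne j J with rfl | hjJ
    · simp only [true_and]
      split_ifs <;> first | rfl | omega
    · simp [hjJ]
  rw [eq_of_hasDerivAt_jordan_pairing hderiv hmean hδ (by omega : mlen j - 1 - mm < mlen j) hMM t]
  refine if_congr ?_ rfl rfl
  constructor <;> rintro ⟨rfl, h⟩ <;> exact ⟨rfl, by omega⟩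

/-- Lemma 5.2 at a single eigenvalue: if the Jordan chains
`φ^k_{j,·}` of `𝒜(λ)` and `ψ^k_{j,·}` of `𝒜*(λ)` at the eigenvalue `λ_k` satisfy
the integrated biorthogonality relations
`(φ_{j,m}, ψ_{J, m_J-1-M})_{𝒴̂} = δ_j^J δ_m^M`, then the pointwise relations
`(φ_{j, m_j-1-m}(t), ψ_{J,M}(t))_Y = δ_j^J δ_m^M` hold for every `t ∈ ℝ`. -/
theorem stmt8
    {X Y : Type*} [NormedAddCommGroup X] [InnerProductSpace ℂ X] [CompleteSpace X]
    [NormedAddCommGroup Y] [InnerProductSpace ℂ Y] [CompleteSpace Y]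
    (e : X →L[ℂ] Y) (A : ℝ → X →L[ℂ] Y) (hAper : ∀ t, A (t + 1) = A t)
    (lamk : ℂ) (Jn : ℕ) (mlen : Fin Jn → ℕ) (hmlen : ∀ j, 1 ≤ mlen j)
    (φ : Fin Jn → ℕ → ℝ → X) (φ' : Fin Jn → ℕ → ℝ → Y)
    (ψ ψ' : Fin Jn → ℕ → ℝ → Y)
    (hφper : ∀ j mm, Function.Periodic (φ j mm) 1)
    (hψper : ∀ j mm, Function.Periodic (ψ j mm) 1)
    (hφderiv : ∀ j mm, mm < mlen j → ∀ t, HasDerivAt (fun s => e (φ j mm s)) (φ' j mm t) t)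
    (hψderiv : ∀ j mm, mm < mlen j → ∀ t, HasDerivAt (ψ j mm) (ψ' j mm t) t)
    -- Jordan chain equations for 𝒜(λ_k):
    (hφchain : ∀ j mm, mm < mlen j → ∀ t,
      φ' j mm t + A t (φ j mm t) + lamk • e (φ j mm t)
        + (if mm = 0 then 0 else e (φ j (mm - 1) t)) = 0)
    -- Jordan chain equations for 𝒜*(λ_k), tested against X:
    (hψchain : ∀ j mm, mm < mlen j → ∀ (x : X) (t : ℝ),
      (inner ℂ (ψ' j mm t) (e x) : ℂ) =
        (inner ℂ (ψ j mm t) ((A t x : Y)) : ℂ) + lamk * (inner ℂ (ψ j mm t) (e x) : ℂ)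
          + (inner ℂ (if mm = 0 then (0 : Y) else ψ j (mm - 1) t) (e x) : ℂ))
    -- integrated biorthogonality (4.14):
    (hbi : ∀ j J mm MM, mm < mlen j → MM < mlen J →
      (∫ t in (0:ℝ)..1, (inner ℂ (ψ J (mlen J - 1 - MM) t) (e (φ j mm t)) : ℂ)) =
        if j = J ∧ mm = MM then 1 else 0) :
    ∀ j J mm MM, mm < mlen j → MM < mlen J → ∀ t : ℝ,
      (inner ℂ (ψ J MM t) (e (φ j (mlen j - 1 - mm) t)) : ℂ) =
        if j = J ∧ mm = MM then 1 else 0 :=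
  stmt8_general e A lamk Jn mlen φ φ' ψ ψ' hφderiv hψderiv hφchain hψchain hbi
end

section
/- Let λ_k ≠ λ_K with λ_k - λ_K not a multiple of 2πi, and let φ, ψ be 1-periodic functions with (D_t + A(t) + λ_k)φ = 0 and (-D_t + A(t)* + λ̄_K)ψ = 0. Then for every t ∈ ℝ, (φ(t), ψ(t))_Y = 0. -/
/-!
The eigen-equations make `I t = (φ t, ψ t)_Y` solve `I' = (λ_K - λ_k) I`, so
`I t = exp ((λ_K - λ_k) t) I 0`. Periodicity gives `I 1 = I 0`, and `exp (λ_K - λ_k) ≠ 1`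
because `λ_k - λ_K ∉ 2πiℤ`; hence `I 0 = 0` and `I ≡ 0`.
-/

open Complex

theorem Complex.eq_exp_mul_of_hasDerivAt_mul {f : ℝ → ℂ} {c : ℂ}
    (hf : ∀ t, HasDerivAt f (c * f t) t) (t : ℝ) : f t = exp (c * t) * f 0 := by
  set g : ℝ → ℂ := fun s => exp (-c * s) * f s
  have hg : ∀ s, HasDerivAt g 0 s := by
    intro s
    have hexp : HasDerivAt (fun s : ℝ => exp (-c * s)) (-c * exp (-c * s)) s := by
      simpa [mul_comm] using ((hasDerivAt_id s).ofReal_comp.const_mul (-c)).cexp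
    exact (hexp.mul (hf s)).congr_deriv (by ring)
  have hconst : g t = g 0 :=
    is_const_of_deriv_eq_zero (fun s => (hg s).differentiableAt) (fun s => (hg s).deriv) t 0
  calc f t = exp (c * t) * g t := by
        simp only [g, ← mul_assoc, ← exp_add, add_neg_cancel, exp_zero, one_mul, neg_mul]
    _ = exp (c * t) * f 0 := by rw [hconst]; simp [g]

theorem Function.Periodic.eq_zero_of_hasDerivAt_mul {f : ℝ → ℂ} {c : ℂ} {T : ℝ}
    (hper : Function.Periodic f T) (hf : ∀ t, HasDerivAt f (c * f t) t)
    (hc : ∀ n : ℤ, c * T ≠ 2 * Real.pi * I * n) : f = 0 := by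
  have hexp : exp (c * T) ≠ 1 := by
    rw [Ne, exp_eq_one_iff]
    rintro ⟨n, hn⟩
    exact hc n (by rw [hn]; ring)
  have hf0 : f 0 = 0 := by
    have hT : f T = exp (c * T) * f 0 := eq_exp_mul_of_hasDerivAt_mul hf T
    rw [show f T = f 0 by simpa using hper 0] at hT
    have : (exp (c * T) - 1) * f 0 = 0 := by linear_combination -hT
    exact (mul_eq_zero.mp this).resolve_left (sub_ne_zero.mpr hexp)
  funext t
  rw [eq_exp_mul_of_hasDerivAt_mul hf t, hf0, mul_zero, Pi.zero_apply]

theorem hasDerivAt_inner_of_eigen {Y : Type*} [NormedAddCommGroup Y] [InnerProductSpace ℂ Y]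
    {u ψ : ℝ → Y} {u' ψ' a : Y} {lamk lamK : ℂ} {t : ℝ}
    (hu : HasDerivAt u u' t) (hψ : HasDerivAt ψ ψ' t)
    (hueig : u' + a + lamk • u t = 0)
    (hψeig : inner ℂ ψ' (u t) = inner ℂ (ψ t) a + lamK * inner ℂ (ψ t) (u t)) :
    HasDerivAt (fun s => inner ℂ (ψ s) (u s)) ((lamK - lamk) * inner ℂ (ψ t) (u t)) t := by
  refine (hψ.inner ℂ hu).congr_deriv ?_
  have hu' : u' = -(a + lamk • u t) := eq_neg_of_add_eq_zero_left (by rwa [← add_assoc])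
  rw [hu', hψeig]
  simp only [inner_add_right, inner_neg_right, inner_smul_right]
  ring

theorem stmt10_general
    {X Y : Type*} [NormedAddCommGroup X] [InnerProductSpace ℂ X]
    [NormedAddCommGroup Y] [InnerProductSpace ℂ Y]
    (e : X →L[ℂ] Y) (A : ℝ → X →L[ℂ] Y)
    (lamk lamK : ℂ)
    (hne2π : ∀ n : ℤ, lamk - lamK ≠ 2 * Real.pi * Complex.I * n)
    (φ : ℝ → X) (φ' : ℝ → Y) (ψ ψ' : ℝ → Y)
    (hφper : Function.Periodic φ 1) (hψper : Function.Periodic ψ 1)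
    (hφderiv : ∀ t, HasDerivAt (fun s => e (φ s)) (φ' t) t)
    (hψderiv : ∀ t, HasDerivAt ψ (ψ' t) t)
    (hφeig : ∀ t, φ' t + A t (φ t) + lamk • e (φ t) = 0)
    (hψeig : ∀ (x : X) (t : ℝ),
      (inner ℂ (ψ' t) (e x) : ℂ) =
        (inner ℂ (ψ t) ((A t x : Y)) : ℂ) + lamK * (inner ℂ (ψ t) (e x) : ℂ)) :
    ∀ t : ℝ, (inner ℂ (ψ t) (e (φ t)) : ℂ) = 0 := by
  have hper : Function.Periodic (fun t => inner ℂ (ψ t) (e (φ t))) 1 := fun t => by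
    simp only [hφper t, hψper t]
  have hderiv := fun t =>
    hasDerivAt_inner_of_eigen (hφderiv t) (hψderiv t) (hφeig t) (hψeig (φ t) t)
  have hc : ∀ n : ℤ, (lamK - lamk) * (1 : ℝ) ≠ 2 * Real.pi * I * n := fun n h => by
    rw [ofReal_one, mul_one] at h
    exact hne2π (-n) (by push_cast; linear_combination -h)
  exact congrFun (hper.eq_zero_of_hasDerivAt_mul hderiv hc)

/-- pointwise orthogonality across distinct eigenvalues.  If
`(D_t + A(t) + λ_k)φ = 0`, `(-D_t + A(t)* + λ̄_K)ψ = 0` (weakly), both `φ, ψ`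
1-periodic, and `λ_k - λ_K` is not an integer multiple of `2πi`, then
`(φ(t), ψ(t))_Y = 0` for every `t ∈ ℝ`. -/
theorem stmt10
    {X Y : Type*} [NormedAddCommGroup X] [InnerProductSpace ℂ X] [CompleteSpace X]
    [NormedAddCommGroup Y] [InnerProductSpace ℂ Y] [CompleteSpace Y]
    (e : X →L[ℂ] Y) (A : ℝ → X →L[ℂ] Y) (hAper : ∀ t, A (t + 1) = A t)
    (lamk lamK : ℂ) (hne : lamk ≠ lamK)
    (hne2π : ∀ n : ℤ, lamk - lamK ≠ 2 * Real.pi * Complex.I * n)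
    (φ : ℝ → X) (φ' : ℝ → Y) (ψ ψ' : ℝ → Y)
    (hφper : Function.Periodic φ 1) (hψper : Function.Periodic ψ 1)
    (hφderiv : ∀ t, HasDerivAt (fun s => e (φ s)) (φ' t) t)
    (hψderiv : ∀ t, HasDerivAt ψ (ψ' t) t)
    (hφeig : ∀ t, φ' t + A t (φ t) + lamk • e (φ t) = 0)
    (hψeig : ∀ (x : X) (t : ℝ),
      (inner ℂ (ψ' t) (e x) : ℂ) =
        (inner ℂ (ψ t) ((A t x : Y)) : ℂ) + lamK * (inner ℂ (ψ t) (e x) : ℂ)) :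
    ∀ t : ℝ, (inner ℂ (ψ t) (e (φ t)) : ℂ) = 0 :=
  stmt10_general e A lamk lamK hne2π φ φ' ψ ψ' hφper hψper hφderiv hψderiv hφeig hψeig
end

section
/- With 𝒫 as above, the projector commutes with ℒ = D_t + A(t): for all sufficiently regular u, ℒ(𝒫u) = 𝒫(ℒu). -/
/-!
Writing `𝒫u = ∑_{c,m} a_{c,m} φ_{c, L_c-1-m}` with `a_{c,m} = (u, ψ_{c,m})_Y`, the product rule
gives `ℒ(𝒫u)` termwise. The chain equation for `ψ` turns the derivative of `a_{c,m}` into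
`(ℒu, ψ_{c,m})_Y + λ_c a_{c,m} + a_{c,m-1}`, and the chain equation for `φ` turns
`D_t φ_k + A φ_k` into `-λ_c φ_k - φ_{k-1}`. The `λ_c` terms cancel, and what remains within each
chain, `∑_m (a_{c,m-1} φ_{c,L_c-1-m} - a_{c,m} φ_{c,L_c-2-m})`, telescopes to zero because both
sums run over the pairs `(i, j)` with `i + j = L_c - 2`.
-/

/-- The `X`-valued projection `𝒫u(t) = ∑_c ∑_{m < L c} (u(t), ψ_{c,m}(t))_Y
· φ_{c, L c - 1 - m}(t)`. -/
noncomputable def PprojX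
    {X Y : Type*} [NormedAddCommGroup X] [InnerProductSpace ℂ X]
    [NormedAddCommGroup Y] [InnerProductSpace ℂ Y]
    (e : X →L[ℂ] Y) (Nc : ℕ) (L : Fin Nc → ℕ)
    (φ : Fin Nc → ℕ → ℝ → X) (ψ : Fin Nc → ℕ → ℝ → Y)
    (u : ℝ → X) (t : ℝ) : X :=
  ∑ c : Fin Nc, ∑ mm ∈ Finset.range (L c),
    (inner ℂ (ψ c mm t) (e (u t)) : ℂ) • φ c (L c - 1 - mm) t

theorem Finset.sum_range_ite_pred_smul_rev {R M : Type*} [Semiring R] [AddCommMonoid M]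
    [Module R M] (n : ℕ) (a : ℕ → R) (v : ℕ → M) :
    ∑ m ∈ range n, (if m = 0 then 0 else a (m - 1)) • v (n - 1 - m) =
      ∑ m ∈ range n, a m • (if n - 1 - m = 0 then 0 else v (n - 1 - m - 1)) := by
  rcases n with _ | n
  · simp
  rw [sum_range_succ', sum_range_succ]
  simp only [if_pos, Nat.add_sub_cancel, Nat.sub_self, zero_smul, smul_zero, add_zero]
  refine sum_congr rfl fun m hm => ?_
  have hm : m < n := mem_range.mp hm
  rw [if_neg m.succ_ne_zero, if_neg (by omega), Nat.sub_sub]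

section JordanChain

variable {X Y : Type*} [NormedAddCommGroup X] [InnerProductSpace ℂ X]
  [NormedAddCommGroup Y] [InnerProductSpace ℂ Y]

theorem ContinuousLinearMap.map_PprojX (T : X →L[ℂ] Y) {e : X →L[ℂ] Y} (Nc : ℕ) (L : Fin Nc → ℕ)
    (φ : Fin Nc → ℕ → ℝ → X) (ψ : Fin Nc → ℕ → ℝ → Y) (u : ℝ → X) (t : ℝ) :
    T (PprojX e Nc L φ ψ u t) =
      ∑ c : Fin Nc, ∑ m ∈ Finset.range (L c),
        (inner ℂ (ψ c m t) (e (u t)) : ℂ) • T (φ c (L c - 1 - m) t) := by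
  simp only [PprojX, map_sum, map_smul]

theorem hasDerivAt_PprojX (e : X →L[ℂ] Y) {Nc : ℕ} {L : Fin Nc → ℕ} {φ : Fin Nc → ℕ → ℝ → X}
    {φ' : Fin Nc → ℕ → ℝ → Y} {ψ ψ' : Fin Nc → ℕ → ℝ → Y} {u : ℝ → X} {u' : ℝ → Y} {t : ℝ}
    (hφ : ∀ c k, k < L c → HasDerivAt (fun s => e (φ c k s)) (φ' c k t) t)
    (hψ : ∀ c m, m < L c → HasDerivAt (ψ c m) (ψ' c m t) t)
    (hu : HasDerivAt (fun s => e (u s)) (u' t) t) :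
    HasDerivAt (fun s => e (PprojX e Nc L φ ψ u s))
      (∑ c : Fin Nc, ∑ m ∈ Finset.range (L c),
        ((inner ℂ (ψ c m t) (e (u t)) : ℂ) • φ' c (L c - 1 - m) t
          + ((inner ℂ (ψ c m t) (u' t) : ℂ) + (inner ℂ (ψ' c m t) (e (u t)) : ℂ))
            • e (φ c (L c - 1 - m) t))) t := by
  simp only [e.map_PprojX]
  refine HasDerivAt.fun_sum fun c _ => HasDerivAt.fun_sum fun m hm => ?_
  have hm : m < L c := Finset.mem_range.mp hm
  exact ((hψ c m hm).inner ℂ hu).smul (hφ c _ (by omega))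

/-- One Jordan chain at a fixed time `t`, with `x = u(t)` and `y = D_t u(t)`. -/
theorem jordanChain_sum_eq (e A : X →L[ℂ] Y) (lam : ℂ) (n : ℕ) (φ : ℕ → X) (φ' ψ ψ' : ℕ → Y)
    (x : X) (y : Y)
    (hφ : ∀ k < n, φ' k + A (φ k) + lam • e (φ k) + (if k = 0 then 0 else e (φ (k - 1))) = 0)
    (hψ : ∀ m < n, (inner ℂ (ψ' m) (e x) : ℂ) =
      inner ℂ (ψ m) (A x) + lam * inner ℂ (ψ m) (e x)
        + inner ℂ (if m = 0 then (0 : Y) else ψ (m - 1)) (e x)) :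
    ∑ m ∈ Finset.range n,
        ((inner ℂ (ψ m) (e x) : ℂ) • φ' (n - 1 - m)
          + ((inner ℂ (ψ m) y : ℂ) + (inner ℂ (ψ' m) (e x) : ℂ)) • e (φ (n - 1 - m))
          + (inner ℂ (ψ m) (e x) : ℂ) • A (φ (n - 1 - m))) =
      ∑ m ∈ Finset.range n, (inner ℂ (ψ m) (y + A x) : ℂ) • e (φ (n - 1 - m)) := by
  set a : ℕ → ℂ := fun m => inner ℂ (ψ m) (e x)
  have htelescope := Finset.sum_range_ite_pred_smul_rev n a (fun k => e (φ k))
  have hprev (m : ℕ) : (inner ℂ (if m = 0 then (0 : Y) else ψ (m - 1)) (e x) : ℂ) =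
      if m = 0 then 0 else a (m - 1) := by
    split_ifs <;> simp [a]
  have hterm : ∀ m ∈ Finset.range n,
      (inner ℂ (ψ m) (e x) : ℂ) • φ' (n - 1 - m)
          + ((inner ℂ (ψ m) y : ℂ) + (inner ℂ (ψ' m) (e x) : ℂ)) • e (φ (n - 1 - m))
          + (inner ℂ (ψ m) (e x) : ℂ) • A (φ (n - 1 - m)) =
        (inner ℂ (ψ m) (y + A x) : ℂ) • e (φ (n - 1 - m))
          + ((if m = 0 then 0 else a (m - 1)) • e (φ (n - 1 - m))
            - a m • (if n - 1 - m = 0 then 0 else e (φ (n - 1 - m - 1)))) := by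
    intro m hm
    have hm : m < n := Finset.mem_range.mp hm
    rw [hψ m hm, hprev, inner_add_right]
    linear_combination (norm := module) a m • hφ (n - 1 - m) (by omega)
  rw [Finset.sum_congr rfl hterm, Finset.sum_add_distrib, Finset.sum_sub_distrib, htelescope,
    sub_self, add_zero]

end JordanChain

theorem stmt13_general
    {X Y : Type*} [NormedAddCommGroup X] [InnerProductSpace ℂ X]
    [NormedAddCommGroup Y] [InnerProductSpace ℂ Y]
    (e : X →L[ℂ] Y) (A : ℝ → X →L[ℂ] Y)
    (Nc : ℕ) (lam : Fin Nc → ℂ) (L : Fin Nc → ℕ)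
    (φ : Fin Nc → ℕ → ℝ → X) (φ' : Fin Nc → ℕ → ℝ → Y)
    (ψ ψ' : Fin Nc → ℕ → ℝ → Y)
    (hφderiv : ∀ c mm, mm < L c → ∀ t, HasDerivAt (fun s => e (φ c mm s)) (φ' c mm t) t)
    (hψderiv : ∀ c mm, mm < L c → ∀ t, HasDerivAt (ψ c mm) (ψ' c mm t) t)
    -- Jordan chain equations for 𝒜(λ_c):
    (hφchain : ∀ c mm, mm < L c → ∀ t,
      φ' c mm t + A t (φ c mm t) + lam c • e (φ c mm t)
        + (if mm = 0 then 0 else e (φ c (mm - 1) t)) = 0)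
    -- Jordan chain equations for 𝒜*(λ_c), tested against X:
    (hψchain : ∀ c mm, mm < L c → ∀ (x : X) (t : ℝ),
      (inner ℂ (ψ' c mm t) (e x) : ℂ) =
        (inner ℂ (ψ c mm t) ((A t x : Y)) : ℂ) + lam c * (inner ℂ (ψ c mm t) (e x) : ℂ)
          + (inner ℂ (if mm = 0 then (0 : Y) else ψ c (mm - 1) t) (e x) : ℂ))
    (u : ℝ → X) (u' : ℝ → Y)
    (huderiv : ∀ t, HasDerivAt (fun s => e (u s)) (u' t) t) :
    ∃ w : ℝ → Y,
      (∀ t, HasDerivAt (fun s => e (PprojX e Nc L φ ψ u s)) (w t) t) ∧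
      ∀ t : ℝ, w t + A t (PprojX e Nc L φ ψ u t) =
        ∑ c : Fin Nc, ∑ mm ∈ Finset.range (L c),
          (inner ℂ (ψ c mm t) (u' t + A t (u t)) : ℂ) • e (φ c (L c - 1 - mm) t) := by
  refine ⟨_, fun t => hasDerivAt_PprojX e (fun c k hk => hφderiv c k hk t)
    (fun c m hm => hψderiv c m hm t) (huderiv t), fun t => ?_⟩
  rw [(A t).map_PprojX, ← Finset.sum_add_distrib]
  refine Finset.sum_congr rfl fun c _ => ?_
  rw [← Finset.sum_add_distrib]
  exact jordanChain_sum_eq e (A t) (lam c) (L c) (φ c · t) (φ' c · t) (ψ c · t) (ψ' c · t)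
    (u t) (u' t) (fun k hk => hφchain c k hk t) (fun m hm => hψchain c m hm (u t) t)

/-- Theorem 5.1(ii): the projector `𝒫` commutes with
`ℒ = D_t + A(t)`: for sufficiently regular `u`, `ℒ(𝒫u) = 𝒫(ℒu)`. -/
theorem stmt13
    {X Y : Type*} [NormedAddCommGroup X] [InnerProductSpace ℂ X] [CompleteSpace X]
    [NormedAddCommGroup Y] [InnerProductSpace ℂ Y] [CompleteSpace Y]
    (e : X →L[ℂ] Y) (A : ℝ → X →L[ℂ] Y)
    (Nc : ℕ) (lam : Fin Nc → ℂ) (L : Fin Nc → ℕ) (hL : ∀ c, 1 ≤ L c)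
    (φ : Fin Nc → ℕ → ℝ → X) (φ' : Fin Nc → ℕ → ℝ → Y)
    (ψ ψ' : Fin Nc → ℕ → ℝ → Y)
    (hφderiv : ∀ c mm, mm < L c → ∀ t, HasDerivAt (fun s => e (φ c mm s)) (φ' c mm t) t)
    (hψderiv : ∀ c mm, mm < L c → ∀ t, HasDerivAt (ψ c mm) (ψ' c mm t) t)
    -- Jordan chain equations for 𝒜(λ_c):
    (hφchain : ∀ c mm, mm < L c → ∀ t,
      φ' c mm t + A t (φ c mm t) + lam c • e (φ c mm t)
        + (if mm = 0 then 0 else e (φ c (mm - 1) t)) = 0)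
    -- Jordan chain equations for 𝒜*(λ_c), tested against X:
    (hψchain : ∀ c mm, mm < L c → ∀ (x : X) (t : ℝ),
      (inner ℂ (ψ' c mm t) (e x) : ℂ) =
        (inner ℂ (ψ c mm t) ((A t x : Y)) : ℂ) + lam c * (inner ℂ (ψ c mm t) (e x) : ℂ)
          + (inner ℂ (if mm = 0 then (0 : Y) else ψ c (mm - 1) t) (e x) : ℂ))
    -- pointwise biorthogonality:
    (hbi : ∀ (c c' : Fin Nc) (mm MM : ℕ), mm < L c → MM < L c' → ∀ t : ℝ,
      (inner ℂ (ψ c' MM t) (e (φ c (L c - 1 - mm) t)) : ℂ) =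
        if c = c' ∧ mm = MM then 1 else 0)
    (u : ℝ → X) (u' : ℝ → Y)
    (huderiv : ∀ t, HasDerivAt (fun s => e (u s)) (u' t) t) :
    ∃ w : ℝ → Y,
      (∀ t, HasDerivAt (fun s => e (PprojX e Nc L φ ψ u s)) (w t) t) ∧
      ∀ t : ℝ, w t + A t (PprojX e Nc L φ ψ u t) =
        ∑ c : Fin Nc, ∑ mm ∈ Finset.range (L c),
          (inner ℂ (ψ c mm t) (u' t + A t (u t)) : ℂ) • e (φ c (L c - 1 - mm) t) :=
  stmt13_general e A Nc lam L φ φ' ψ ψ' hφderiv hψderiv hφchain hψchain u u' huderiv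
end

section
/- Let u ∈ 𝒳_loc solve ℒu = 0 with ‖u;𝒳(t,t+1)‖ ≤ Ce^{β₁t} for t ≥ 0 and ‖u;𝒳(t,t+1)‖ ≤ Ce^{β₂t} for t ≤ 0, where β₁ < β₂ and the half-open segments δ_{β₁}, δ_{β₂} contain no eigenvalues of 𝒜(λ). Then u is a finite linear combination of the Floquet solutions Φ^k_{j,m}(t) = e^{λ_k t}Σ_{n≤m}(t^n/n!)φ^k_{j,m-n}(t) associated to eigenvalues λ_k with β₁ < Re λ_k < β₂ and Im λ_k ∈ [0,2π). -/
open MeasureTheory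

/-- 1-periodic solutions of the pencil equation `D_t u + A(t)u + λu = 0`. -/
def solSet {X Y : Type*} [NormedAddCommGroup X] [InnerProductSpace ℂ X]
    [NormedAddCommGroup Y] [InnerProductSpace ℂ Y]
    (e : X →L[ℂ] Y) (A : ℝ → X →L[ℂ] Y) (lam : ℂ) : Set (ℝ → X) :=
  {u | Function.Periodic u 1 ∧ ∃ u' : ℝ → Y,
    (∀ t, HasDerivAt (fun s => e (u s)) (u' t) t) ∧
    ∀ t, u' t + A t (u t) + lam • e (u t) = 0}

/-- The Floquet solution `Φ_{c,m}(t) = e^{λ_c t} ∑_{n ≤ m} (tⁿ/n!) φ_{c,m-n}(t)`. -/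
noncomputable def Floquet {X : Type*} [AddCommGroup X] [Module ℂ X]
    {Nc : ℕ} (lam : Fin Nc → ℂ) (φ : Fin Nc → ℕ → ℝ → X)
    (c : Fin Nc) (mm : ℕ) (t : ℝ) : X :=
  Complex.exp (lam c * (t : ℂ)) •
    ∑ n ∈ Finset.range (mm + 1), (((t : ℂ) ^ n / n.factorial) • φ c (mm - n) t)

/- ### Auxiliary material for the proof of `stmt14`. -/

section Stmt14Aux

open Set

/-- Integrability of a function that is interval integrable on every compact interval,
on a unit-length interval. -/
lemma stmt14_auxPiece (S : ℝ → ℝ) (hS : ∀ a b : ℝ, IntervalIntegrable S volume a b) (a : ℝ) :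
    IntegrableOn S (Set.Icc a (a+1)) := by
  have h := hS a (a+1)
  rw [intervalIntegrable_iff'] at h
  rwa [Set.uIcc_of_le (by linarith)] at h

/-- Weighted integrability on the right half-line from exponential decay of the
local `L²` norms. -/
lemma stmt14_auxRight (S : ℝ → ℝ) (hS : ∀ a b : ℝ, IntervalIntegrable S volume a b)
    (hpos : ∀ t, 0 ≤ S t) (w γ B : ℝ) (hwγ : γ < w)
    (hdecay : ∀ n : ℕ, (∫ s in (n:ℝ)..((n:ℝ)+1), S s) ≤ B * Real.exp (γ * n)) :
    IntegrableOn (fun t => Real.exp (-(w * t)) * S t) (Set.Ici (0:ℝ)) := by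
  have hfS : ∀ a : ℝ, IntegrableOn (fun t => Real.exp (-(w*t)) * S t) (Set.Icc a (a+1)) := by
    intro a
    have h : IntervalIntegrable (fun t => Real.exp (-(w*t)) * S t) volume a (a+1) :=
      (hS a (a+1)).continuousOn_mul ((Real.continuous_exp.comp ((continuous_const.mul continuous_id').neg)).continuousOn)
    rw [intervalIntegrable_iff'] at h
    rwa [Set.uIcc_of_le (by linarith)] at h
  have hcover : Set.Ici (0:ℝ) = ⋃ n : ℕ, Set.Ico (n:ℝ) ((n:ℝ)+1) := by
    ext x; simp only [Set.mem_Ici, Set.mem_iUnion, Set.mem_Ico]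
    constructor
    · intro hx; exact ⟨⌊x⌋₊, Nat.floor_le hx, Nat.lt_floor_add_one x⟩
    · rintro ⟨n, h1, _⟩; exact le_trans (Nat.cast_nonneg n) h1
  rw [hcover]
  refine integrableOn_iUnion_of_summable_integral_norm
    (fun n => (hfS n).mono_set Set.Ico_subset_Icc_self) ?_
  have hbound : ∀ n : ℕ, (∫ x in Set.Ico (n:ℝ) ((n:ℝ)+1), ‖Real.exp (-(w*x)) * S x‖) ≤
      (Real.exp |w| * B) * (Real.exp (γ - w)) ^ n := by
    intro n
    have hmono : (∫ x in Set.Ico (n:ℝ) ((n:ℝ)+1), ‖Real.exp (-(w*x)) * S x‖) ≤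
        ∫ x in Set.Ico (n:ℝ) ((n:ℝ)+1), (Real.exp (|w| - w*n)) * S x := by
      refine setIntegral_mono_on (((hfS n).mono_set Set.Ico_subset_Icc_self).norm)
        (((stmt14_auxPiece S hS n).mono_set Set.Ico_subset_Icc_self).const_mul _)
        measurableSet_Ico ?_
      intro x hx
      rw [Real.norm_eq_abs, abs_of_nonneg (mul_nonneg (Real.exp_pos _).le (hpos x))]
      refine mul_le_mul_of_nonneg_right ?_ (hpos x)
      rw [Real.exp_le_exp]
      rcases le_total 0 w with h | h
      · nlinarith [le_abs_self w, mul_le_mul_of_nonneg_left hx.1 h]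
      · nlinarith [abs_of_nonpos h,
          mul_nonneg (neg_nonneg.2 h) (show (0:ℝ) ≤ (n:ℝ)+1-x by linarith [hx.2])]
    have hIS : (∫ x in Set.Ico (n:ℝ) ((n:ℝ)+1), S x) ≤ B * Real.exp (γ * n) := by
      have h : (∫ x in Set.Ico (n:ℝ) ((n:ℝ)+1), S x) = ∫ s in (n:ℝ)..((n:ℝ)+1), S s := by
        rw [integral_Ico_eq_integral_Ioo, ← integral_Ioc_eq_integral_Ioo,
          ← intervalIntegral.integral_of_le (by linarith)]
      rw [h]; exact hdecay n
    calc (∫ x in Set.Ico (n:ℝ) ((n:ℝ)+1), ‖Real.exp (-(w*x)) * S x‖)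
        ≤ ∫ x in Set.Ico (n:ℝ) ((n:ℝ)+1), (Real.exp (|w| - w*n)) * S x := hmono
      _ = Real.exp (|w| - w*n) * ∫ x in Set.Ico (n:ℝ) ((n:ℝ)+1), S x := by
          rw [integral_const_mul]
      _ ≤ Real.exp (|w| - w*n) * (B * Real.exp (γ * n)) :=
          mul_le_mul_of_nonneg_left hIS (Real.exp_pos _).le
      _ = (Real.exp |w| * B) * (Real.exp (γ - w)) ^ n := by
          rw [← Real.exp_nat_mul, show ((n:ℝ))*(γ-w) = γ*(n:ℝ) + -(w*(n:ℝ)) by ring,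
            Real.exp_add, show |w| - w*(n:ℝ) = |w| + -(w*(n:ℝ)) by ring, Real.exp_add]
          ring
  refine Summable.of_nonneg_of_le
    (fun n => setIntegral_nonneg measurableSet_Ico fun x _ => norm_nonneg _) hbound ?_
  exact (summable_geometric_of_lt_one (Real.exp_pos _).le
    (Real.exp_lt_one_iff.2 (by linarith))).mul_left _

/-- Weighted integrability on the left half-line from exponential decay of the
local `L²` norms. -/
lemma stmt14_auxLeft (S : ℝ → ℝ) (hS : ∀ a b : ℝ, IntervalIntegrable S volume a b)
    (hpos : ∀ t, 0 ≤ S t) (w γ B : ℝ) (hwγ : w < γ)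
    (hdecay : ∀ n : ℕ, (∫ s in (-(n:ℝ))..(-(n:ℝ)+1), S s) ≤ B * Real.exp (γ * (-(n:ℝ)))) :
    IntegrableOn (fun t => Real.exp (-(w * t)) * S t) (Set.Iic (1:ℝ)) := by
  have hfS : ∀ a : ℝ, IntegrableOn (fun t => Real.exp (-(w*t)) * S t) (Set.Icc a (a+1)) := by
    intro a
    have h : IntervalIntegrable (fun t => Real.exp (-(w*t)) * S t) volume a (a+1) :=
      (hS a (a+1)).continuousOn_mul ((Real.continuous_exp.comp ((continuous_const.mul continuous_id').neg)).continuousOn)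
    rw [intervalIntegrable_iff'] at h
    rwa [Set.uIcc_of_le (by linarith)] at h
  have hcover : Set.Iic (1:ℝ) = ⋃ n : ℕ, Set.Ioc (-(n:ℝ)) (-(n:ℝ)+1) := by
    ext x; simp only [Set.mem_Iic, Set.mem_iUnion, Set.mem_Ioc]
    constructor
    · intro hx
      refine ⟨⌊1-x⌋₊, ?_, ?_⟩
      · have := Nat.lt_floor_add_one (1-x); linarith
      · have := Nat.floor_le (show (0:ℝ) ≤ 1-x by linarith); linarith
    · rintro ⟨n, _, h2⟩
      have : (0:ℝ) ≤ (n:ℝ) := Nat.cast_nonneg n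
      linarith
  rw [hcover]
  refine integrableOn_iUnion_of_summable_integral_norm
    (fun n => (hfS (-(n:ℝ))).mono_set Set.Ioc_subset_Icc_self) ?_
  have hbound : ∀ n : ℕ, (∫ x in Set.Ioc (-(n:ℝ)) (-(n:ℝ)+1), ‖Real.exp (-(w*x)) * S x‖) ≤
      (Real.exp |w| * B) * (Real.exp (w - γ)) ^ n := by
    intro n
    have hmono : (∫ x in Set.Ioc (-(n:ℝ)) (-(n:ℝ)+1), ‖Real.exp (-(w*x)) * S x‖) ≤
        ∫ x in Set.Ioc (-(n:ℝ)) (-(n:ℝ)+1), (Real.exp (|w| + w*n)) * S x := by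
      refine setIntegral_mono_on (((hfS (-(n:ℝ))).mono_set Set.Ioc_subset_Icc_self).norm)
        (((stmt14_auxPiece S hS (-(n:ℝ))).mono_set Set.Ioc_subset_Icc_self).const_mul _)
        measurableSet_Ioc ?_
      intro x hx
      rw [Real.norm_eq_abs, abs_of_nonneg (mul_nonneg (Real.exp_pos _).le (hpos x))]
      refine mul_le_mul_of_nonneg_right ?_ (hpos x)
      rw [Real.exp_le_exp]
      rcases le_total 0 w with h | h
      · nlinarith [le_abs_self w, mul_le_mul_of_nonneg_left hx.1.le h,
          mul_nonneg h (show (0:ℝ) ≤ x + (n:ℝ) by linarith [hx.1.le])]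
      · nlinarith [abs_of_nonpos h,
          mul_nonneg (neg_nonneg.2 h) (show (0:ℝ) ≤ -(n:ℝ)+1-x by linarith [hx.2])]
    have hIS : (∫ x in Set.Ioc (-(n:ℝ)) (-(n:ℝ)+1), S x) ≤ B * Real.exp (γ * (-(n:ℝ))) := by
      have h : (∫ x in Set.Ioc (-(n:ℝ)) (-(n:ℝ)+1), S x) = ∫ s in (-(n:ℝ))..(-(n:ℝ)+1), S s := by
        rw [← intervalIntegral.integral_of_le (by linarith)]
      rw [h]; exact hdecay n
    calc (∫ x in Set.Ioc (-(n:ℝ)) (-(n:ℝ)+1), ‖Real.exp (-(w*x)) * S x‖)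
        ≤ ∫ x in Set.Ioc (-(n:ℝ)) (-(n:ℝ)+1), (Real.exp (|w| + w*n)) * S x := hmono
      _ = Real.exp (|w| + w*n) * ∫ x in Set.Ioc (-(n:ℝ)) (-(n:ℝ)+1), S x := by
          rw [integral_const_mul]
      _ ≤ Real.exp (|w| + w*n) * (B * Real.exp (γ * (-(n:ℝ)))) :=
          mul_le_mul_of_nonneg_left hIS (Real.exp_pos _).le
      _ = (Real.exp |w| * B) * (Real.exp (w - γ)) ^ n := by
          rw [← Real.exp_nat_mul, show ((n:ℝ))*(w-γ) = γ*(-(n:ℝ)) + (w*(n:ℝ)) by ring,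
            Real.exp_add, Real.exp_add]
          ring
  refine Summable.of_nonneg_of_le
    (fun n => setIntegral_nonneg measurableSet_Ioc fun x _ => norm_nonneg _) hbound ?_
  exact (summable_geometric_of_lt_one (Real.exp_pos _).le
    (Real.exp_lt_one_iff.2 (by linarith))).mul_left _

/-- A smooth cutoff function, equal to `1` on `(-∞,0]` and to `0` on `[1,∞)`. -/
noncomputable def stmt14_eta : ℝ → ℝ := fun t => 1 - Real.smoothTransition t

/-- The derivative of the cutoff `stmt14_eta`. -/
noncomputable def stmt14_eta' : ℝ → ℝ := fun t => -deriv Real.smoothTransition t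

lemma stmt14_eta_hasDeriv (t : ℝ) : HasDerivAt stmt14_eta (stmt14_eta' t) t := by
  have h : DifferentiableAt ℝ Real.smoothTransition t :=
    (Real.smoothTransition.contDiff (n := 1)).differentiable one_ne_zero t
  exact ((hasDerivAt_const t (1:ℝ)).sub h.hasDerivAt).congr_deriv (zero_sub _)

lemma stmt14_eta_cont : Continuous stmt14_eta :=
  continuous_const.sub Real.smoothTransition.continuous

lemma stmt14_eta'_cont : Continuous stmt14_eta' :=
  ((Real.smoothTransition.contDiff (n := 1)).continuous_deriv le_rfl).neg

lemma stmt14_eta_abs_le (t : ℝ) : |stmt14_eta t| ≤ 1 := by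
  rw [abs_le]
  unfold stmt14_eta
  constructor <;>
    nlinarith [Real.smoothTransition.le_one t, Real.smoothTransition.nonneg t]

lemma stmt14_eta_sub_one_abs_le (t : ℝ) : |stmt14_eta t - 1| ≤ 1 := by
  rw [abs_le]
  unfold stmt14_eta
  constructor <;>
    nlinarith [Real.smoothTransition.le_one t, Real.smoothTransition.nonneg t]

lemma stmt14_eta_eq_zero {t : ℝ} (ht : 1 ≤ t) : stmt14_eta t = 0 := by
  simp [stmt14_eta, Real.smoothTransition.one_of_one_le ht]

lemma stmt14_eta_eq_one {t : ℝ} (ht : t ≤ 0) : stmt14_eta t = 1 := by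
  simp [stmt14_eta, Real.smoothTransition.zero_of_nonpos ht]

lemma stmt14_eta'_eq_zero {t : ℝ} (ht : t < 0 ∨ 1 < t) : stmt14_eta' t = 0 := by
  rcases ht with ht | ht
  · have h : Real.smoothTransition =ᶠ[nhds t] fun _ => (0:ℝ) := by
      filter_upwards [Iio_mem_nhds ht] with x hx
      exact Real.smoothTransition.zero_of_nonpos hx.le
    simp [stmt14_eta', h.deriv_eq]
  · have h : Real.smoothTransition =ᶠ[nhds t] fun _ => (1:ℝ) := by
      filter_upwards [Ioi_mem_nhds ht] with x hx
      exact Real.smoothTransition.one_of_one_le hx.le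
    simp [stmt14_eta', h.deriv_eq]

lemma stmt14_eta'_compactSupport : HasCompactSupport stmt14_eta' := by
  refine HasCompactSupport.intro (isCompact_Icc (a := (0:ℝ)) (b := 1)) ?_
  intro x hx
  simp only [Set.mem_Icc, not_and_or, not_le] at hx
  exact stmt14_eta'_eq_zero (by tauto)

end Stmt14Aux
/-- Corollary 6.3: if `u ∈ 𝒳_loc` solves `ℒu = 0` with
`‖u;𝒳(t,t+1)‖ ≤ Ce^{β₁t}` for `t ≥ 0` and `≤ Ce^{β₂t}` for `t ≤ 0`, where the
segments `δ_{β₁}, δ_{β₂}` are free of eigenvalues of `𝒜(λ)`, then `u` is a finite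
linear combination of the Floquet solutions `Φ_{c,m}` attached to the eigenvalues
`λ_c` with `β₁ < Re λ_c < β₂`, `Im λ_c ∈ [0,2π)`.  Theorem 6.2 is taken as a
hypothesis (`hT62`), as permitted. -/
theorem stmt14
    {X Y : Type*} [NormedAddCommGroup X] [InnerProductSpace ℂ X] [CompleteSpace X]
    [NormedAddCommGroup Y] [InnerProductSpace ℂ Y] [CompleteSpace Y]
    (e : X →L[ℂ] Y) (A : ℝ → X →L[ℂ] Y) (hAper : ∀ t, A (t + 1) = A t)
    (β₁ β₂ : ℝ) (hβ : β₁ < β₂)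
    -- no eigenvalues on the segments δ_{β₁} and δ_{β₂}:
    (hfree : ∀ lam : ℂ, (lam.re = β₁ ∨ lam.re = β₂) → lam.im ∈ Set.Ico 0 (2 * Real.pi) →
      ∀ v ∈ solSet e A lam, v = 0)
    -- the Floquet data: eigenvalues λ_c in the strip with their Jordan chains
    (Nc : ℕ) (lam : Fin Nc → ℂ)
    (hlam : ∀ c, β₁ < (lam c).re ∧ (lam c).re < β₂ ∧ (lam c).im ∈ Set.Ico 0 (2 * Real.pi))
    (L : Fin Nc → ℕ) (hL : ∀ c, 1 ≤ L c) (φ : Fin Nc → ℕ → ℝ → X)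
    -- Theorem 6.2 as a hypothesis: two solutions of ℒu = f lying in 𝒳_{-β₁}
    -- and 𝒳_{-β₂} respectively differ by a combination of Floquet solutions
    (hT62 : ∀ (f : ℝ → Y) (u₁ u₂ : ℝ → X) (u₁' u₂' : ℝ → Y),
      (∀ t, HasDerivAt (fun s => e (u₁ s)) (u₁' t) t) →
      (∀ t, HasDerivAt (fun s => e (u₂ s)) (u₂' t) t) →
      (∀ t, u₁' t + A t (u₁ t) = f t) →
      (∀ t, u₂' t + A t (u₂ t) = f t) →
      Integrable (fun t => Real.exp (-2 * β₁ * t) * (‖u₁ t‖ ^ 2 + ‖u₁' t‖ ^ 2)) →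
      Integrable (fun t => Real.exp (-2 * β₂ * t) * (‖u₂ t‖ ^ 2 + ‖u₂' t‖ ^ 2)) →
      Integrable (fun t => Real.exp (-2 * β₁ * t) * ‖f t‖ ^ 2) →
      Integrable (fun t => Real.exp (-2 * β₂ * t) * ‖f t‖ ^ 2) →
      ∃ a : Fin Nc → ℕ → ℂ, ∀ t,
        u₂ t - u₁ t = ∑ c : Fin Nc, ∑ mm ∈ Finset.range (L c),
          a c mm • Floquet lam φ c mm t) :
    ∀ (u : ℝ → X) (u' : ℝ → Y) (C : ℝ),
      (∀ t, HasDerivAt (fun s => e (u s)) (u' t) t) →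
      (∀ t, u' t + A t (u t) = 0) →
      (∀ a b : ℝ, IntervalIntegrable (fun s => ‖u s‖ ^ 2 + ‖u' s‖ ^ 2) volume a b) →
      (∀ t : ℝ, 0 ≤ t →
        Real.sqrt (∫ s in t..(t + 1), (‖u s‖ ^ 2 + ‖u' s‖ ^ 2)) ≤ C * Real.exp (β₁ * t)) →
      (∀ t : ℝ, t ≤ 0 →
        Real.sqrt (∫ s in t..(t + 1), (‖u s‖ ^ 2 + ‖u' s‖ ^ 2)) ≤ C * Real.exp (β₂ * t)) →
      ∃ a : Fin Nc → ℕ → ℂ, ∀ t,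
        u t = ∑ c : Fin Nc, ∑ mm ∈ Finset.range (L c), a c mm • Floquet lam φ c mm t := by
  intro u u' C hu hueq hloc hgrow₁ hgrow₂
  obtain ⟨M, hM⟩ :=
    stmt14_eta'_cont.bounded_above_of_compact_support stmt14_eta'_compactSupport
  have hM0 : 0 ≤ M := le_trans (norm_nonneg _) (hM 0)
  have hSpos : ∀ t : ℝ, 0 ≤ ‖u t‖^2 + ‖u' t‖^2 := fun t => by positivity
  -- exponential decay of the local integrals, squared form
  have hdecayR : ∀ n : ℕ, (∫ s in (n:ℝ)..((n:ℝ)+1), (‖u s‖^2 + ‖u' s‖^2)) ≤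
      C^2 * Real.exp ((2*β₁) * n) := by
    intro n
    have h0 : (0:ℝ) ≤ (n:ℝ) := Nat.cast_nonneg n
    have hI : 0 ≤ ∫ s in (n:ℝ)..((n:ℝ)+1), (‖u s‖^2 + ‖u' s‖^2) :=
      intervalIntegral.integral_nonneg (by linarith) (fun x _ => hSpos x)
    calc (∫ s in (n:ℝ)..((n:ℝ)+1), (‖u s‖^2 + ‖u' s‖^2))
        = Real.sqrt (∫ s in (n:ℝ)..((n:ℝ)+1), (‖u s‖^2 + ‖u' s‖^2)) ^ 2 :=
          (Real.sq_sqrt hI).symm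
      _ ≤ (C * Real.exp (β₁ * n)) ^ 2 :=
          pow_le_pow_left₀ (Real.sqrt_nonneg _) (hgrow₁ (n:ℝ) h0) 2
      _ = C^2 * Real.exp ((2*β₁) * n) := by
          rw [mul_pow, pow_two (Real.exp _), ← Real.exp_add,
            show β₁*(n:ℝ) + β₁*(n:ℝ) = (2*β₁)*(n:ℝ) by ring]
  have hdecayL : ∀ n : ℕ, (∫ s in (-(n:ℝ))..(-(n:ℝ)+1), (‖u s‖^2 + ‖u' s‖^2)) ≤
      C^2 * Real.exp ((2*β₂) * (-(n:ℝ))) := by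
    intro n
    have h0 : -(n:ℝ) ≤ 0 := neg_nonpos.2 (Nat.cast_nonneg n)
    have hI : 0 ≤ ∫ s in (-(n:ℝ))..(-(n:ℝ)+1), (‖u s‖^2 + ‖u' s‖^2) :=
      intervalIntegral.integral_nonneg (by linarith) (fun x _ => hSpos x)
    calc (∫ s in (-(n:ℝ))..(-(n:ℝ)+1), (‖u s‖^2 + ‖u' s‖^2))
        = Real.sqrt (∫ s in (-(n:ℝ))..(-(n:ℝ)+1), (‖u s‖^2 + ‖u' s‖^2)) ^ 2 :=
          (Real.sq_sqrt hI).symm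
      _ ≤ (C * Real.exp (β₂ * (-(n:ℝ)))) ^ 2 :=
          pow_le_pow_left₀ (Real.sqrt_nonneg _) (hgrow₂ (-(n:ℝ)) h0) 2
      _ = C^2 * Real.exp ((2*β₂) * (-(n:ℝ))) := by
          rw [mul_pow, pow_two (Real.exp _), ← Real.exp_add,
            show β₂*(-(n:ℝ)) + β₂*(-(n:ℝ)) = (2*β₂)*(-(n:ℝ)) by ring]
  -- measurability facts
  have hec : Continuous (fun t => e (u t)) :=
    continuous_iff_continuousAt.2 fun t => (hu t).differentiableAt.continuousAt
  have hu'm : StronglyMeasurable u' := by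
    have h : u' = deriv (fun s => e (u s)) := funext fun t => ((hu t).deriv).symm
    rw [h]; exact stronglyMeasurable_deriv _
  have hSm : AEStronglyMeasurable (fun t : ℝ => ‖u t‖^2 + ‖u' t‖^2) volume := by
    have hcov : (⋃ n : ℕ, Set.Ioc (-(n:ℝ)) (n:ℝ)) = Set.univ := by
      ext x; simp only [Set.mem_iUnion, Set.mem_Ioc, Set.mem_univ, iff_true]
      obtain ⟨n, hn⟩ := exists_nat_gt |x|
      exact ⟨n, by linarith [neg_abs_le x], by linarith [le_abs_self x]⟩
    have hall : ∀ n : ℕ, AEStronglyMeasurable (fun t : ℝ => ‖u t‖^2 + ‖u' t‖^2)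
        (volume.restrict (Set.Ioc (-(n:ℝ)) (n:ℝ))) := by
      intro n
      have h2 := hloc (-(n:ℝ)) (n:ℝ)
      rw [intervalIntegrable_iff] at h2
      have h3 := h2.1
      rwa [Set.uIoc_of_le (neg_le_self (Nat.cast_nonneg n))] at h3
    have h := AEStronglyMeasurable.iUnion hall
    rwa [hcov, Measure.restrict_univ] at h
  have hnu2 : AEStronglyMeasurable (fun t : ℝ => ‖u t‖^2) volume := by
    have h : (fun t : ℝ => ‖u t‖^2) = fun t => (‖u t‖^2 + ‖u' t‖^2) - ‖u' t‖^2 := by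
      funext t; ring
    rw [h]
    exact hSm.sub (hu'm.norm.measurable.pow_const 2).aestronglyMeasurable
  -- the first weighted integrability
  have hint1 : Integrable (fun t => Real.exp (-2*β₁*t) *
      (‖stmt14_eta t • u t‖^2 + ‖stmt14_eta' t • e (u t) + stmt14_eta t • u' t‖^2)) := by
    have haux : IntegrableOn (fun t => Real.exp (-((2*β₁) * t)) * (‖u t‖^2 + ‖u' t‖^2))
        (Set.Iic (1:ℝ)) :=
      stmt14_auxLeft _ hloc hSpos (2*β₁) (2*β₂) (C^2) (by linarith) hdecayL
    have hh : Integrable ((Set.Iic (1:ℝ)).indicator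
        (fun t => (2 + 2*(M*‖e‖)^2) * (Real.exp (-((2*β₁) * t)) * (‖u t‖^2 + ‖u' t‖^2)))) :=
      MeasureTheory.IntegrableOn.integrable_indicator (haux.const_mul _) measurableSet_Iic
    refine hh.mono' ?_ (Filter.Eventually.of_forall ?_)
    · have hvm : StronglyMeasurable (fun t => stmt14_eta' t • e (u t) + stmt14_eta t • u' t) :=
        ((stmt14_eta'_cont.smul hec).stronglyMeasurable).add
          (stmt14_eta_cont.stronglyMeasurable.smul hu'm)
      have hrw : (fun t => Real.exp (-2*β₁*t) *
          (‖stmt14_eta t • u t‖^2 + ‖stmt14_eta' t • e (u t) + stmt14_eta t • u' t‖^2))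
          = fun t => Real.exp (-2*β₁*t) *
            ((stmt14_eta t)^2 * ‖u t‖^2 +
              ‖stmt14_eta' t • e (u t) + stmt14_eta t • u' t‖^2) := by
        funext t
        rw [norm_smul, mul_pow, Real.norm_eq_abs, sq_abs]
      rw [hrw]
      exact ((Real.continuous_exp.comp (continuous_const.mul continuous_id')).aestronglyMeasurable).mul
        ((((stmt14_eta_cont.pow 2).aestronglyMeasurable).mul hnu2).add
          (hvm.norm.measurable.pow_const 2).aestronglyMeasurable)
    · intro t
      rcases le_or_gt t 1 with ht | ht
      · rw [Set.indicator_of_mem (Set.mem_Iic.2 ht)]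
        rw [Real.norm_eq_abs, abs_of_nonneg (by positivity)]
        have hinner : ‖stmt14_eta t • u t‖^2 +
            ‖stmt14_eta' t • e (u t) + stmt14_eta t • u' t‖^2 ≤
            (2 + 2*(M*‖e‖)^2) * (‖u t‖^2 + ‖u' t‖^2) := by
          have h1 : ‖stmt14_eta t • u t‖ ≤ ‖u t‖ := by
            rw [norm_smul, Real.norm_eq_abs]
            calc |stmt14_eta t| * ‖u t‖ ≤ 1 * ‖u t‖ :=
                mul_le_mul_of_nonneg_right (stmt14_eta_abs_le t) (norm_nonneg _)
              _ = ‖u t‖ := one_mul _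
          have h2 : ‖stmt14_eta' t • e (u t) + stmt14_eta t • u' t‖ ≤
              M * ‖e‖ * ‖u t‖ + ‖u' t‖ := by
            have ha : ‖stmt14_eta' t • e (u t)‖ ≤ M * ‖e‖ * ‖u t‖ := by
              rw [norm_smul, mul_assoc]
              exact mul_le_mul (hM t) (e.le_opNorm _) (norm_nonneg _) hM0
            have hb : ‖stmt14_eta t • u' t‖ ≤ ‖u' t‖ := by
              rw [norm_smul, Real.norm_eq_abs]
              calc |stmt14_eta t| * ‖u' t‖ ≤ 1 * ‖u' t‖ :=
                  mul_le_mul_of_nonneg_right (stmt14_eta_abs_le t) (norm_nonneg _)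
                _ = ‖u' t‖ := one_mul _
            calc ‖stmt14_eta' t • e (u t) + stmt14_eta t • u' t‖
                ≤ ‖stmt14_eta' t • e (u t)‖ + ‖stmt14_eta t • u' t‖ := norm_add_le _ _
              _ ≤ M * ‖e‖ * ‖u t‖ + ‖u' t‖ := add_le_add ha hb
          have h1sq := pow_le_pow_left₀ (norm_nonneg _) h1 2
          have h2sq := pow_le_pow_left₀ (norm_nonneg _) h2 2
          nlinarith [sq_nonneg (M*‖e‖*‖u t‖ - ‖u' t‖), sq_nonneg (M*‖e‖*‖u' t‖),
            sq_nonneg (‖u t‖)]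
        calc Real.exp (-2*β₁*t) *
            (‖stmt14_eta t • u t‖^2 + ‖stmt14_eta' t • e (u t) + stmt14_eta t • u' t‖^2)
            ≤ Real.exp (-2*β₁*t) * ((2 + 2*(M*‖e‖)^2) * (‖u t‖^2 + ‖u' t‖^2)) :=
              mul_le_mul_of_nonneg_left hinner (Real.exp_pos _).le
          _ = (2 + 2*(M*‖e‖)^2) * (Real.exp (-((2*β₁)*t)) * (‖u t‖^2 + ‖u' t‖^2)) := by
              rw [show (-2*β₁*t) = -((2*β₁)*t) by ring]; ring
      · rw [Set.indicator_of_notMem (by simp only [Set.mem_Iic, not_le]; exact ht)]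
        simp [stmt14_eta_eq_zero ht.le, stmt14_eta'_eq_zero (Or.inr ht)]
  -- the second weighted integrability
  have hint2 : Integrable (fun t => Real.exp (-2*β₂*t) *
      (‖(stmt14_eta t - 1) • u t‖^2 +
        ‖stmt14_eta' t • e (u t) + (stmt14_eta t - 1) • u' t‖^2)) := by
    have haux : IntegrableOn (fun t => Real.exp (-((2*β₂) * t)) * (‖u t‖^2 + ‖u' t‖^2))
        (Set.Ici (0:ℝ)) :=
      stmt14_auxRight _ hloc hSpos (2*β₂) (2*β₁) (C^2) (by linarith) hdecayR
    have hh : Integrable ((Set.Ici (0:ℝ)).indicator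
        (fun t => (2 + 2*(M*‖e‖)^2) * (Real.exp (-((2*β₂) * t)) * (‖u t‖^2 + ‖u' t‖^2)))) :=
      MeasureTheory.IntegrableOn.integrable_indicator (haux.const_mul _) measurableSet_Ici
    refine hh.mono' ?_ (Filter.Eventually.of_forall ?_)
    · have hvm : StronglyMeasurable
          (fun t => stmt14_eta' t • e (u t) + (stmt14_eta t - 1) • u' t) :=
        ((stmt14_eta'_cont.smul hec).stronglyMeasurable).add
          ((stmt14_eta_cont.sub continuous_const).stronglyMeasurable.smul hu'm)
      have hrw : (fun t => Real.exp (-2*β₂*t) *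
          (‖(stmt14_eta t - 1) • u t‖^2 +
            ‖stmt14_eta' t • e (u t) + (stmt14_eta t - 1) • u' t‖^2))
          = fun t => Real.exp (-2*β₂*t) *
            ((stmt14_eta t - 1)^2 * ‖u t‖^2 +
              ‖stmt14_eta' t • e (u t) + (stmt14_eta t - 1) • u' t‖^2) := by
        funext t
        rw [norm_smul, mul_pow, Real.norm_eq_abs, sq_abs]
      rw [hrw]
      exact ((Real.continuous_exp.comp (continuous_const.mul continuous_id')).aestronglyMeasurable).mul
        (((((stmt14_eta_cont.sub continuous_const).pow 2).aestronglyMeasurable).mul hnu2).add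
          (hvm.norm.measurable.pow_const 2).aestronglyMeasurable)
    · intro t
      rcases le_or_gt 0 t with ht | ht
      · rw [Set.indicator_of_mem (Set.mem_Ici.2 ht)]
        rw [Real.norm_eq_abs, abs_of_nonneg (by positivity)]
        have hinner : ‖(stmt14_eta t - 1) • u t‖^2 +
            ‖stmt14_eta' t • e (u t) + (stmt14_eta t - 1) • u' t‖^2 ≤
            (2 + 2*(M*‖e‖)^2) * (‖u t‖^2 + ‖u' t‖^2) := by
          have h1 : ‖(stmt14_eta t - 1) • u t‖ ≤ ‖u t‖ := by
            rw [norm_smul, Real.norm_eq_abs]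
            calc |stmt14_eta t - 1| * ‖u t‖ ≤ 1 * ‖u t‖ :=
                mul_le_mul_of_nonneg_right (stmt14_eta_sub_one_abs_le t) (norm_nonneg _)
              _ = ‖u t‖ := one_mul _
          have h2 : ‖stmt14_eta' t • e (u t) + (stmt14_eta t - 1) • u' t‖ ≤
              M * ‖e‖ * ‖u t‖ + ‖u' t‖ := by
            have ha : ‖stmt14_eta' t • e (u t)‖ ≤ M * ‖e‖ * ‖u t‖ := by
              rw [norm_smul, mul_assoc]
              exact mul_le_mul (hM t) (e.le_opNorm _) (norm_nonneg _) hM0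
            have hb : ‖(stmt14_eta t - 1) • u' t‖ ≤ ‖u' t‖ := by
              rw [norm_smul, Real.norm_eq_abs]
              calc |stmt14_eta t - 1| * ‖u' t‖ ≤ 1 * ‖u' t‖ :=
                  mul_le_mul_of_nonneg_right (stmt14_eta_sub_one_abs_le t) (norm_nonneg _)
                _ = ‖u' t‖ := one_mul _
            calc ‖stmt14_eta' t • e (u t) + (stmt14_eta t - 1) • u' t‖
                ≤ ‖stmt14_eta' t • e (u t)‖ + ‖(stmt14_eta t - 1) • u' t‖ := norm_add_le _ _
              _ ≤ M * ‖e‖ * ‖u t‖ + ‖u' t‖ := add_le_add ha hb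
          have h1sq := pow_le_pow_left₀ (norm_nonneg _) h1 2
          have h2sq := pow_le_pow_left₀ (norm_nonneg _) h2 2
          nlinarith [sq_nonneg (M*‖e‖*‖u t‖ - ‖u' t‖), sq_nonneg (M*‖e‖*‖u' t‖),
            sq_nonneg (‖u t‖)]
        calc Real.exp (-2*β₂*t) *
            (‖(stmt14_eta t - 1) • u t‖^2 +
              ‖stmt14_eta' t • e (u t) + (stmt14_eta t - 1) • u' t‖^2)
            ≤ Real.exp (-2*β₂*t) * ((2 + 2*(M*‖e‖)^2) * (‖u t‖^2 + ‖u' t‖^2)) :=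
              mul_le_mul_of_nonneg_left hinner (Real.exp_pos _).le
          _ = (2 + 2*(M*‖e‖)^2) * (Real.exp (-((2*β₂)*t)) * (‖u t‖^2 + ‖u' t‖^2)) := by
              rw [show (-2*β₂*t) = -((2*β₂)*t) by ring]; ring
      · rw [Set.indicator_of_notMem (by simp only [Set.mem_Ici, not_le]; exact ht)]
        simp [stmt14_eta_eq_one ht.le, stmt14_eta'_eq_zero (Or.inl ht)]
  -- integrability of the right-hand side
  have hintf : ∀ β : ℝ,
      Integrable (fun t => Real.exp (-2*β*t) * ‖stmt14_eta' t • e (u t)‖^2) := by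
    intro β
    refine Continuous.integrable_of_hasCompactSupport
      ((Real.continuous_exp.comp (continuous_const.mul continuous_id')).mul
        (((stmt14_eta'_cont.smul hec).norm).pow 2)) ?_
    refine HasCompactSupport.intro (isCompact_Icc (a := (0:ℝ)) (b := 1)) ?_
    intro x hx
    simp only [Set.mem_Icc, not_and_or, not_le] at hx
    have h0 : stmt14_eta' x = 0 := stmt14_eta'_eq_zero (by tauto)
    simp [h0]
  -- derivatives and equations
  have hd1 : ∀ t, HasDerivAt (fun s => e (stmt14_eta s • u s))
      (stmt14_eta' t • e (u t) + stmt14_eta t • u' t) t := by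
    intro t
    have hfun : (fun s => e (stmt14_eta s • u s)) = fun s => stmt14_eta s • e (u s) :=
      funext fun s => (e.restrictScalars ℝ).map_smul _ _
    rw [hfun]
    have h := (stmt14_eta_hasDeriv t).smul (hu t)
    convert h using 1
    abel
    exact add_comm _ _
  have hd2 : ∀ t, HasDerivAt (fun s => e ((stmt14_eta s - 1) • u s))
      (stmt14_eta' t • e (u t) + (stmt14_eta t - 1) • u' t) t := by
    intro t
    have hfun : (fun s => e ((stmt14_eta s - 1) • u s))
        = fun s => (stmt14_eta s - 1) • e (u s) :=
      funext fun s => (e.restrictScalars ℝ).map_smul _ _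
    rw [hfun]
    have h := ((stmt14_eta_hasDeriv t).sub_const 1).smul (hu t)
    convert h using 1
    abel
    exact add_comm _ _
  have he1 : ∀ t, (stmt14_eta' t • e (u t) + stmt14_eta t • u' t)
      + A t (stmt14_eta t • u t) = stmt14_eta' t • e (u t) := by
    intro t
    have hsm : A t (stmt14_eta t • u t) = stmt14_eta t • A t (u t) :=
      ((A t).restrictScalars ℝ).map_smul _ _
    rw [hsm, add_assoc, ← smul_add, hueq t, smul_zero, add_zero]
  have he2 : ∀ t, (stmt14_eta' t • e (u t) + (stmt14_eta t - 1) • u' t)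
      + A t ((stmt14_eta t - 1) • u t) = stmt14_eta' t • e (u t) := by
    intro t
    have hsm : A t ((stmt14_eta t - 1) • u t) = (stmt14_eta t - 1) • A t (u t) :=
      ((A t).restrictScalars ℝ).map_smul _ _
    rw [hsm, add_assoc, ← smul_add, hueq t, smul_zero, add_zero]
  -- apply Theorem 6.2
  obtain ⟨a, ha⟩ := hT62 (fun t => stmt14_eta' t • e (u t))
    (fun t => stmt14_eta t • u t) (fun t => (stmt14_eta t - 1) • u t)
    (fun t => stmt14_eta' t • e (u t) + stmt14_eta t • u' t)
    (fun t => stmt14_eta' t • e (u t) + (stmt14_eta t - 1) • u' t)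
    hd1 hd2 he1 he2 hint1 hint2 (hintf β₁) (hintf β₂)
  refine ⟨fun c m => -a c m, fun t => ?_⟩
  have h : (stmt14_eta t - 1) • u t - stmt14_eta t • u t
      = ∑ c : Fin Nc, ∑ mm ∈ Finset.range (L c), a c mm • Floquet lam φ c mm t := ha t
  have hsub : (stmt14_eta t - 1) • u t - stmt14_eta t • u t = -u t := by
    rw [sub_smul, one_smul]; abel
  rw [hsub] at h
  calc u t = -(-u t) := (neg_neg _).symm
    _ = -∑ c : Fin Nc, ∑ mm ∈ Finset.range (L c), a c mm • Floquet lam φ c mm t := by rw [h]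
    _ = ∑ c : Fin Nc, ∑ mm ∈ Finset.range (L c), (-a c mm) • Floquet lam φ c mm t := by
        simp [neg_smul, Finset.sum_neg_distrib]
end
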